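/- arXiv:math/0602441 — 7 statements merged into one kernel-verified Lean document; each statement's English description precedes it below -/
import Mathlib

section
/- Let A be a unital C*-algebra, let y ∈ A be selfadjoint with −1 ≤ y ≤ 1, and let e ∈ A be a projection satisfying e·y⁺ = y⁺ = y⁺·e and e·y⁻ = 0 = y⁻·e (the properties of the support projection of the positive part of y). Then for every x ∈ A with 0 ≤ x ≤ 1 one has −1 ≤ y − e x e ≤ 1. -/
/-- Lemma 3.2 (first inequality): if `y` is selfadjoint with `-1 ≤ y ≤ 1`, `e` is a
projection acting as the support projection of `y⁺` (so `e y⁺ = y⁺ = y⁺ e` and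
`e y⁻ = 0 = y⁻ e`), and `0 ≤ x ≤ 1`, then `-1 ≤ y - e x e ≤ 1`.
Here `y⁺` and `y⁻` are the positive and negative parts of `y` given by the
continuous functional calculus. -/
theorem stmt_2 {A : Type*} [CStarAlgebra A] [PartialOrder A] [StarOrderedRing A]
    (y e : A) (hy_sa : IsSelfAdjoint y) (hy₁ : -1 ≤ y) (hy₂ : y ≤ 1)
    (he_sa : IsSelfAdjoint e) (he_idem : e * e = e)
    (h₁ : e * y⁺ = y⁺) (h₂ : y⁺ * e = y⁺)
    (h₃ : e * y⁻ = 0) (h₄ : y⁻ * e = 0)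
    (x : A) (hx₀ : 0 ≤ x) (hx₁ : x ≤ 1) :
    -1 ≤ y - e * x * e ∧ y - e * x * e ≤ 1 := by
  -- `e x e` is nonnegative
  have hexe : (0 : A) ≤ e * x * e := by
    simpa [he_sa.star_eq] using star_left_conjugate_nonneg hx₀ e
  have upper : y - e * x * e ≤ 1 :=
    le_trans (by simpa using sub_le_self y hexe) hy₂
  -- `e x e ≤ e`
  have hexe_le : e * x * e ≤ e := by
    have := he_sa.conjugate_le_conjugate hx₁
    simpa [he_idem] using this
  -- spectrum of `y` is bounded below by `-1`
  have hspec : ∀ t ∈ spectrum ℝ y, (-1 : ℝ) ≤ t := by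
    intro t ht
    have h0 : (0 : A) ≤ algebraMap ℝ A 1 + y := by
      rw [map_one, add_comm, ← sub_neg_eq_add]
      exact sub_nonneg.mpr hy₁
    have ht' : (1 : ℝ) + t ∈ spectrum ℝ (algebraMap ℝ A 1 + y) := by
      rw [← spectrum.singleton_add_eq]
      exact Set.add_mem_add rfl ht
    have := spectrum_nonneg_of_nonneg h0 ht'
    linarith
  -- hence `y⁻ ≤ 1`
  have hneg_le_one : y⁻ ≤ (1 : A) := by
    rw [CFC.negPart_def, cfcₙ_eq_cfc]
    exact cfc_le_one _ y fun t ht => by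
      have := hspec t ht
      simp only [_root_.negPart_def]
      rw [neg_le] at this
      exact max_le (by linarith) zero_le_one
  -- `(1 - e)(1 - y⁻)(1 - e) = 1 - e - y⁻`
  have hkey : (1 - e) * (1 - y⁻) * (1 - e) = 1 - e - y⁻ := by
    noncomm_ring
    rw [h₃, h₄, he_idem]
    noncomm_ring
  -- `0 ≤ 1 - e - y⁻`
  have h1e_sa : IsSelfAdjoint (1 - e : A) := (IsSelfAdjoint.one (R := A)).sub he_sa
  have hpos : (0 : A) ≤ 1 - e - y⁻ := by
    rw [← hkey]
    exact h1e_sa.conjugate_nonneg (sub_nonneg.mpr hneg_le_one)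
  -- lower bound: `-1 ≤ y - e ≤ y - e x e`
  have lower : -1 ≤ y - e * x * e := by
    have h1 : -1 ≤ y - e := by
      have : (0 : A) ≤ y⁺ + (1 - e - y⁻) := add_nonneg (CFC.posPart_nonneg y) hpos
      have hyd : y⁺ - y⁻ = y := CFC.posPart_sub_negPart y hy_sa
      have : (0 : A) ≤ y - e + 1 := by
        calc (0 : A) ≤ y⁺ + (1 - e - y⁻) := this
          _ = (y⁺ - y⁻) - e + 1 := by abel
          _ = y - e + 1 := by rw [hyd]
      rw [← sub_neg_eq_add] at this
      exact sub_nonneg.mp this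
    have h2 : y - e ≤ y - e * x * e := by
      simpa using sub_le_sub_left hexe_le y
    exact h1.trans h2
  exact ⟨lower, upper⟩
end

section
/- Let A be a unital C*-algebra, let y ∈ A be selfadjoint with −1 ≤ y ≤ 1, and let e ∈ A be a projection satisfying e·y⁺ = y⁺ = y⁺·e and e·y⁻ = 0 = y⁻·e (the properties of the support projection of the positive part of y). Then for every x ∈ A with 0 ≤ x ≤ 1 one has −1 ≤ y + (1−e) x (1−e) ≤ 1. -/
/-- Lemma 3.2 (second inequality): if `y` is selfadjoint with `-1 ≤ y ≤ 1`, `e` is a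
projection acting as the support projection of `y⁺` (so `e y⁺ = y⁺ = y⁺ e` and
`e y⁻ = 0 = y⁻ e`), and `0 ≤ x ≤ 1`, then `-1 ≤ y + (1-e) x (1-e) ≤ 1`.
Here `y⁺` and `y⁻` are the positive and negative parts of `y` given by the
continuous functional calculus. -/
theorem stmt_3 {A : Type*} [CStarAlgebra A] [PartialOrder A] [StarOrderedRing A]
    (y e : A) (hy_sa : IsSelfAdjoint y) (hy₁ : -1 ≤ y) (hy₂ : y ≤ 1)
    (he_sa : IsSelfAdjoint e) (he_idem : e * e = e)
    (h₁ : e * y⁺ = y⁺) (h₂ : y⁺ * e = y⁺)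
    (h₃ : e * y⁻ = 0) (h₄ : y⁻ * e = 0)
    (x : A) (hx₀ : 0 ≤ x) (hx₁ : x ≤ 1) :
    -1 ≤ y + (1 - e) * x * (1 - e) ∧ y + (1 - e) * x * (1 - e) ≤ 1 := by
  have hf_sa : IsSelfAdjoint (1 - e) := (IsSelfAdjoint.one A).sub he_sa
  have hz : (0:A) ≤ (1 - e) * x * (1 - e) := by
    simpa [hf_sa.star_eq] using star_left_conjugate_nonneg hx₀ (1 - e)
  constructor
  · calc (-1 : A) ≤ y := hy₁
      _ ≤ y + (1 - e) * x * (1 - e) := le_add_of_nonneg_right hz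
  · have hpos : y⁺ ≤ e := by
      have h := star_left_conjugate_le_conjugate hy₂ e
      rw [he_sa.star_eq] at h
      calc y⁺ = e * y * e := by
            conv_rhs => rw [← CFC.posPart_sub_negPart y hy_sa]
            rw [mul_sub, sub_mul, h₁, h₂, h₃, zero_mul, sub_zero]
        _ ≤ e * 1 * e := h
        _ = e := by rw [mul_one, he_idem]
    have hzf : (1 - e) * x * (1 - e) ≤ 1 - e := by
      have h := star_left_conjugate_le_conjugate hx₁ (1 - e)
      rw [hf_sa.star_eq, mul_one] at h
      calc (1 - e) * x * (1 - e) ≤ (1 - e) * (1 - e) := h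
        _ = 1 - e := by rw [mul_sub, sub_mul, sub_mul, he_idem]; noncomm_ring
    calc y + (1 - e) * x * (1 - e)
        ≤ y⁺ + (1 - e) * x * (1 - e) := by
          gcongr
          exact CFC.le_posPart hy_sa
      _ ≤ e + (1 - e) := by gcongr
      _ = 1 := by noncomm_ring
end

section
/- Let (Ω,Σ,μ) be a probability space and let δ > 0. Let x be a real-valued measurable function with ‖x‖_∞ ≤ 1. Then for every real-valued measurable function y with ‖y‖_∞ ≤ 1 and ‖y‖_1 ≤ δ there exist real-valued measurable functions u, v with ‖u‖_∞ ≤ 1, ‖v‖_∞ ≤ 1, ‖u − x‖_1 ≤ δ, ‖v − x‖_1 ≤ δ, and y = u − v μ-almost everywhere. (In other words, with N(x,δ) = { y : ‖y‖_∞ ≤ 1, ‖y − x‖_1 ≤ δ }, one has N(0,δ) ⊆ N(x,δ) − N(x,δ).) -/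
open MeasureTheory

lemma stmt_5_key (x y : ℝ) (hx : |x| ≤ 1) (hy : |y| ≤ 1) :
    |max (-1) (min 1 (x + y))| ≤ 1 ∧ |max (-1) (min 1 (x + y)) - y| ≤ 1 ∧
    |max (-1) (min 1 (x + y)) - x| ≤ |y| ∧ |max (-1) (min 1 (x + y)) - y - x| ≤ |y| := by
  rw [abs_le] at hx hy
  rcases le_total (x + y) (-1) with h1 | h1
  · have hm : min 1 (x + y) = x + y := min_eq_right (by linarith)
    have hM : max (-1) (x + y) = -1 := max_eq_left h1
    rw [hm, hM]
    have hyneg : y ≤ 0 := by linarith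
    rw [abs_le, abs_le, abs_le, abs_le]
    have : |y| = -y := abs_of_nonpos hyneg
    rw [this]
    refine ⟨⟨by norm_num, by norm_num⟩, ⟨by linarith, by linarith⟩,
      ⟨by linarith, by linarith⟩, ⟨by linarith, by linarith⟩⟩
  · rcases le_total 1 (x + y) with h2 | h2
    · have hm : min 1 (x + y) = 1 := min_eq_left h2
      rw [hm]
      have hM : max (-1 : ℝ) 1 = 1 := by norm_num
      rw [hM]
      have hypos : 0 ≤ y := by linarith
      rw [abs_le, abs_le, abs_le, abs_le]
      have : |y| = y := abs_of_nonneg hypos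
      rw [this]
      refine ⟨⟨by norm_num, by norm_num⟩, ⟨by linarith, by linarith⟩,
        ⟨by linarith, by linarith⟩, ⟨by linarith, by linarith⟩⟩
    · have hm : min 1 (x + y) = x + y := min_eq_right h2
      have hM : max (-1) (x + y) = x + y := max_eq_right h1
      rw [hm, hM]
      rw [abs_le, abs_le]
      rcases abs_le.1 (le_refl |y|) with ⟨hy1, hy2⟩
      refine ⟨⟨by linarith, by linarith⟩, ⟨by linarith, by linarith⟩, ?_, ?_⟩
      · simpa using le_refl |y|
      · simpa using abs_nonneg y
  
/-- Lemma 0.1 (commutative geometry lemma): on a probability space, with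
`N(x,δ) = { y : ‖y‖_∞ ≤ 1, ‖y − x‖_1 ≤ δ }`, one has `N(0,δ) ⊆ N(x,δ) − N(x,δ)`
for every `x` in the unit ball of `L^∞` and every `δ > 0`. -/
theorem stmt_5 {Ω : Type*} [MeasurableSpace Ω] (μ : Measure Ω) [IsProbabilityMeasure μ]
    (δ : ℝ) (hδ : 0 < δ)
    (x : Ω → ℝ) (hx_meas : Measurable x) (hx_bdd : ∀ᵐ ω ∂μ, |x ω| ≤ 1)
    (y : Ω → ℝ) (hy_meas : Measurable y) (hy_bdd : ∀ᵐ ω ∂μ, |y ω| ≤ 1)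
    (hy_one : ∫⁻ ω, ENNReal.ofReal |y ω| ∂μ ≤ ENNReal.ofReal δ) :
    ∃ u v : Ω → ℝ, Measurable u ∧ Measurable v ∧
      (∀ᵐ ω ∂μ, |u ω| ≤ 1) ∧ (∀ᵐ ω ∂μ, |v ω| ≤ 1) ∧
      (∫⁻ ω, ENNReal.ofReal |u ω - x ω| ∂μ ≤ ENNReal.ofReal δ) ∧
      (∫⁻ ω, ENNReal.ofReal |v ω - x ω| ∂μ ≤ ENNReal.ofReal δ) ∧
      y =ᵐ[μ] u - v := by
  set u : Ω → ℝ := fun ω => max (-1) (min 1 (x ω + y ω)) with hu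
  set v : Ω → ℝ := fun ω => u ω - y ω with hv
  have hu_meas : Measurable u :=
    Measurable.max measurable_const (Measurable.min measurable_const (hx_meas.add hy_meas))
  have hv_meas : Measurable v := hu_meas.sub hy_meas
  refine ⟨u, v, hu_meas, hv_meas, ?_, ?_, ?_, ?_, ?_⟩
  · filter_upwards [hx_bdd, hy_bdd] with ω h1 h2
    exact (stmt_5_key _ _ h1 h2).1
  · filter_upwards [hx_bdd, hy_bdd] with ω h1 h2
    exact (stmt_5_key _ _ h1 h2).2.1
  · refine le_trans (lintegral_mono_ae ?_) hy_one
    filter_upwards [hx_bdd, hy_bdd] with ω h1 h2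
    exact ENNReal.ofReal_le_ofReal (stmt_5_key _ _ h1 h2).2.2.1
  · refine le_trans (lintegral_mono_ae ?_) hy_one
    filter_upwards [hx_bdd, hy_bdd] with ω h1 h2
    exact ENNReal.ofReal_le_ofReal (stmt_5_key _ _ h1 h2).2.2.2
  · filter_upwards with ω
    simp [hv]
end

section
/- Let (Ω,Σ,μ) be a probability space and let a_n : L^∞(Ω,μ;ℂ) → L⁰(Ω,μ;ℂ) be a sequence of linear maps such that for every x ∈ L^∞, sup_n |a_n(x)(ω)| < ∞ for μ-almost every ω, and such that for all ε > 0 and δ > 0 there exists γ > 0 with: every x ∈ L^∞ with ‖x‖_∞ ≤ 1 and μ{ ω : |x(ω)| > γ } ≤ γ satisfies μ{ ω : sup_n |a_n(x)(ω)| > δ } ≤ ε. Then the set { x : ‖x‖_∞ ≤ 1 and (a_n(x))_n converges μ-almost everywhere } is sequentially closed in the unit ball of L^∞ with respect to convergence in measure: if x_k are in this set, ‖x‖_∞ ≤ 1, and x_k → x in measure, then (a_n(x))_n converges μ-almost everywhere. -/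
open MeasureTheory Filter Topology Set
open scoped ENNReal

/-!
Let `T ω` be the oscillation of `n ↦ aₙ(x)(ω)`, i.e. the infimum over `N` of the diameter of its
`N`-th tail; the sequence converges wherever `T` vanishes. Comparing with the a.e. convergent
sequence `aₙ(xₖ)(ω)` gives `T ≤ 2 supₙ |aₙ(x - xₖ)| = 4 supₙ |aₙ(yₖ)|` a.e., where
`yₖ = (x - xₖ)/2` lies in the unit ball and tends to `0` in measure. Continuity of the maximal
operator at `0` then yields `μ {T > δ} ≤ ε` for all `ε, δ > 0`, so `T = 0` a.e.
-/

noncomputable def tailEDiam {X : Type*} [PseudoEMetricSpace X] (u : ℕ → X) : ℝ≥0∞ :=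
  ⨅ N, Metric.ediam (u '' Ici N)

section tailEDiam

variable {X : Type*} [PseudoEMetricSpace X] {u : ℕ → X}

theorem cauchySeq_of_tailEDiam_eq_zero (hu : tailEDiam u = 0) : CauchySeq u := by
  refine EMetric.cauchySeq_iff.2 fun ε hε => ?_
  obtain ⟨N, hN⟩ := iInf_lt_iff.1 (hu ▸ hε : tailEDiam u < ε)
  exact ⟨N, fun m hm n hn =>
    (Metric.edist_le_ediam_of_mem (mem_image_of_mem u hm) (mem_image_of_mem u hn)).trans_lt hN⟩

theorem tailEDiam_le_of_tendsto {v : ℕ → X} {l : X} {R : ℝ≥0∞} (hv : Tendsto v atTop (𝓝 l))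
    (huv : ∀ n, edist (u n) (v n) ≤ R) : tailEDiam u ≤ 2 * R := by
  refine ENNReal.le_of_forall_pos_le_add fun ε hε _ => ?_
  obtain ⟨N, hN⟩ := EMetric.tendsto_atTop.1 hv (ε / 2) (by simpa using hε.ne')
  have htail : u '' Ici N ⊆ Metric.closedEBall l (R + ε / 2) := by
    rintro _ ⟨n, hn, rfl⟩
    exact (edist_triangle _ _ _).trans (add_le_add (huv n) (hN n hn).le)
  calc tailEDiam u ≤ Metric.ediam (u '' Ici N) := iInf_le _ N
    _ ≤ 2 * (R + ε / 2) := (Metric.ediam_mono htail).trans (Metric.ediam_closedEBall_le)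
    _ = 2 * R + ε := by rw [mul_add, ENNReal.mul_div_cancel two_ne_zero ENNReal.ofNat_ne_top]

end tailEDiam

theorem ae_eq_zero_of_forall_measure_ofReal_lt {Ω : Type*} [MeasurableSpace Ω] {μ : Measure Ω}
    {T : Ω → ℝ≥0∞} (hT : ∀ δ : ℝ, 0 < δ → μ {ω | ENNReal.ofReal δ < T ω} = 0) :
    ∀ᵐ ω ∂μ, T ω = 0 := by
  have hcover : {ω | T ω ≠ 0} ⊆ ⋃ j : ℕ, {ω | ENNReal.ofReal (1 / (j + 1)) < T ω} := by
    intro ω hω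
    obtain ⟨r, -, hr0, hrT⟩ := ENNReal.lt_iff_exists_real_btwn.1 (pos_iff_ne_zero.2 hω)
    obtain ⟨j, hj⟩ := exists_nat_one_div_lt (ENNReal.ofReal_pos.1 hr0)
    refine mem_iUnion.2 ⟨j, lt_trans ?_ hrT⟩
    exact (ENNReal.ofReal_lt_ofReal_iff_of_nonneg (by positivity)).2 hj
  exact measure_mono_null hcover (measure_iUnion_null fun j => hT _ (by positivity))

theorem measure_ofReal_lt_le_of_ae_le_four_mul {Ω : Type*} [MeasurableSpace Ω] {μ : Measure Ω}
    {T S : Ω → ℝ≥0∞} {δ : ℝ} (h : ∀ᵐ ω ∂μ, T ω ≤ 4 * S ω) :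
    μ {ω | ENNReal.ofReal δ < T ω} ≤ μ {ω | ENNReal.ofReal (δ / 4) < S ω} := by
  have hδ : ENNReal.ofReal δ = 4 * ENNReal.ofReal (δ / 4) := by
    rw [← ENNReal.ofReal_ofNat 4, ← ENNReal.ofReal_mul (by norm_num)]
    ring_nf
  refine measure_mono_ae ?_
  filter_upwards [h] with ω hTS (hT : ENNReal.ofReal δ < T ω)
  exact lt_of_not_ge fun hS => hT.not_ge (hTS.trans ((mul_le_mul_right hS 4).trans_eq hδ.symm))

section LinearToAEEqFun

variable {Ω 𝕜 E F : Type*} [MeasurableSpace Ω] {μ : Measure Ω} [RCLike 𝕜]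
  [AddCommGroup E] [Module 𝕜 E] [NormedAddCommGroup F] [NormedSpace 𝕜 F]
  (a : ℕ → E →ₗ[𝕜] (Ω →ₘ[μ] F))

theorem ae_forall_sub_eq_two_smul_half_sub (x x' : E) :
    ∀ᵐ ω ∂μ, ∀ n, (a n x : Ω → F) ω - (a n x' : Ω → F) ω
      = (2 : 𝕜) • (a n ((2⁻¹ : 𝕜) • (x - x')) : Ω → F) ω := by
  refine ae_all_iff.2 fun n => ?_
  have hlin : a n x - a n x' = (2 : 𝕜) • a n ((2⁻¹ : 𝕜) • (x - x')) := by
    rw [← map_smul, smul_smul, mul_inv_cancel₀ two_ne_zero, one_smul, map_sub]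
  filter_upwards [AEEqFun.coeFn_sub (a n x) (a n x'),
    AEEqFun.coeFn_smul (2 : 𝕜) (a n ((2⁻¹ : 𝕜) • (x - x')))] with ω hsub hsmul
  rw [← Pi.sub_apply, ← hsub, hlin, hsmul, Pi.smul_apply]

theorem ae_tailEDiam_le_four_mul_iSup {x x' : E} {f : Ω → F}
    (hx' : ∀ᵐ ω ∂μ, Tendsto (fun n => (a n x' : Ω → F) ω) atTop (𝓝 (f ω))) :
    ∀ᵐ ω ∂μ, tailEDiam (fun n => (a n x : Ω → F) ω)
      ≤ 4 * ⨆ n, ‖(a n ((2⁻¹ : 𝕜) • (x - x')) : Ω → F) ω‖ₑ := by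
  filter_upwards [hx', ae_forall_sub_eq_two_smul_half_sub a x x'] with ω hlim hsub
  calc _ ≤ 2 * (2 * ⨆ n, ‖(a n ((2⁻¹ : 𝕜) • (x - x')) : Ω → F) ω‖ₑ) := by
        refine tailEDiam_le_of_tendsto hlim fun n => ?_
        rw [edist_eq_enorm_sub, hsub, enorm_smul, enorm_eq_nnnorm (2 : 𝕜), RCLike.nnnorm_two,
          ENNReal.coe_ofNat]
        gcongr
        exact le_iSup (fun n => ‖(a n ((2⁻¹ : 𝕜) • (x - x')) : Ω → F) ω‖ₑ) n
    _ = _ := by rw [← mul_assoc]; norm_num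

end LinearToAEEqFun

theorem norm_half_smul_sub_le_one {𝕜 E : Type*} [RCLike 𝕜] [SeminormedAddCommGroup E]
    [NormedSpace 𝕜 E] {x y : E} (hx : ‖x‖ ≤ 1) (hy : ‖y‖ ≤ 1) :
    ‖(2⁻¹ : 𝕜) • (x - y)‖ ≤ 1 := by
  rw [norm_smul, norm_inv, RCLike.norm_two]
  linarith [norm_sub_le x y]

theorem measure_lt_norm_half_smul_sub_le {Ω 𝕜 E : Type*} [MeasurableSpace Ω] {μ : Measure Ω}
    [RCLike 𝕜] [NormedAddCommGroup E] [NormedSpace 𝕜 E] {p : ℝ≥0∞} (x y : Lp E p μ) {γ : ℝ} :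
    μ {ω | γ < ‖((2⁻¹ : 𝕜) • (x - y) : Lp E p μ) ω‖} ≤ μ {ω | γ ≤ ‖(y : Ω → E) ω - x ω‖} := by
  refine measure_mono_ae ?_
  filter_upwards [Lp.coeFn_smul (2⁻¹ : 𝕜) (x - y), Lp.coeFn_sub x y] with ω hsmul hsub hγ
  change γ < _ at hγ
  have hγ' : γ < 2⁻¹ * ‖(x : Ω → E) ω - y ω‖ := by
    simpa only [hsmul, hsub, Pi.smul_apply, Pi.sub_apply, norm_smul, norm_inv, RCLike.norm_two]
      using hγ
  show γ ≤ ‖(y : Ω → E) ω - x ω‖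
  rw [norm_sub_rev]
  linarith [norm_nonneg ((x : Ω → E) ω - y ω)]

theorem stmt_10_general {Ω : Type*} [MeasurableSpace Ω] (μ : Measure Ω)
    (a : ℕ → (Lp ℂ ⊤ μ) →ₗ[ℂ] (Ω →ₘ[μ] ℂ))
    (ha_max : ∀ ε δ : ℝ, 0 < ε → 0 < δ → ∃ γ : ℝ, 0 < γ ∧ ∀ x : Lp ℂ ⊤ μ, ‖x‖ ≤ 1 →
      μ {ω | γ < ‖(x : Ω → ℂ) ω‖} ≤ ENNReal.ofReal γ →
      μ {ω | ENNReal.ofReal δ < ⨆ n, (‖(a n x : Ω → ℂ) ω‖₊ : ℝ≥0∞)} ≤ ENNReal.ofReal ε)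
    (xs : ℕ → Lp ℂ ⊤ μ) (x : Lp ℂ ⊤ μ)
    (hxs_ball : ∀ k, ‖xs k‖ ≤ 1)
    (hxs_conv : ∀ k, ∃ f : Ω → ℂ, Measurable f ∧
      ∀ᵐ ω ∂μ, Tendsto (fun n => (a n (xs k) : Ω → ℂ) ω) atTop (𝓝 (f ω)))
    (hx_ball : ‖x‖ ≤ 1)
    (hxs_x : TendstoInMeasure μ (fun k ω => (xs k : Ω → ℂ) ω) atTop (fun ω => (x : Ω → ℂ) ω)) :
    ∃ f : Ω → ℂ, Measurable f ∧
      ∀ᵐ ω ∂μ, Tendsto (fun n => (a n x : Ω → ℂ) ω) atTop (𝓝 (f ω)) := by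
  set T : Ω → ℝ≥0∞ := fun ω => tailEDiam fun n => (a n x : Ω → ℂ) ω
  have hT_small : ∀ δ : ℝ, 0 < δ → μ {ω | ENNReal.ofReal δ < T ω} = 0 := by
    intro δ hδ
    refine nonpos_iff_eq_zero.1 (ENNReal.le_of_forall_pos_le_add fun ε hε _ => ?_)
    obtain ⟨γ, hγ, hmax⟩ := ha_max ε (δ / 4) hε (by positivity)
    obtain ⟨k, hk⟩ := ((tendstoInMeasure_iff_norm.1 hxs_x γ hγ).eventually_lt_const
      (ENNReal.ofReal_pos.2 hγ)).exists
    obtain ⟨f, -, hf⟩ := hxs_conv k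
    calc μ {ω | ENNReal.ofReal δ < T ω}
        ≤ μ {ω | ENNReal.ofReal (δ / 4) <
            ⨆ n, ‖(a n ((2⁻¹ : ℂ) • (x - xs k)) : Ω → ℂ) ω‖ₑ} :=
          measure_ofReal_lt_le_of_ae_le_four_mul (ae_tailEDiam_le_four_mul_iSup a hf)
      _ ≤ ENNReal.ofReal ε :=
          hmax _ (norm_half_smul_sub_le_one hx_ball (hxs_ball k))
            ((measure_lt_norm_half_smul_sub_le x (xs k)).trans hk.le)
      _ = 0 + ε := by rw [zero_add, ENNReal.ofReal_coe_nnreal]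
  have hcauchy : ∀ᵐ ω ∂μ, ∃ l, Tendsto (fun n => (a n x : Ω → ℂ) ω) atTop (𝓝 l) := by
    filter_upwards [ae_eq_zero_of_forall_measure_ofReal_lt hT_small] with ω hω
    exact cauchySeq_tendsto_of_complete (cauchySeq_of_tailEDiam_eq_zero hω)
  exact measurable_limit_of_tendsto_metrizable_ae (fun n => (a n x).aemeasurable) hcauchy

/-- Theorem 0.3 (commutative): if `a_n : L^∞ → L⁰` are linear maps whose maximal function
is finite a.e. for every `x ∈ L^∞` and whose maximal operator is continuous at `0` on the
unit ball of `L^∞` in measure, then the set of `x` in the unit ball for which `(a_n(x))`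
converges a.e. is sequentially closed in the unit ball with respect to convergence in
measure. -/
theorem stmt_10 {Ω : Type*} [MeasurableSpace Ω] (μ : Measure Ω) [IsProbabilityMeasure μ]
    (a : ℕ → (Lp ℂ ⊤ μ) →ₗ[ℂ] (Ω →ₘ[μ] ℂ))
    (ha_bdd : ∀ x : Lp ℂ ⊤ μ, ∀ᵐ ω ∂μ, (⨆ n, (‖(a n x : Ω → ℂ) ω‖₊ : ℝ≥0∞)) < ⊤)
    (ha_max : ∀ ε δ : ℝ, 0 < ε → 0 < δ → ∃ γ : ℝ, 0 < γ ∧ ∀ x : Lp ℂ ⊤ μ, ‖x‖ ≤ 1 →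
      μ {ω | γ < ‖(x : Ω → ℂ) ω‖} ≤ ENNReal.ofReal γ →
      μ {ω | ENNReal.ofReal δ < ⨆ n, (‖(a n x : Ω → ℂ) ω‖₊ : ℝ≥0∞)} ≤ ENNReal.ofReal ε)
    (xs : ℕ → Lp ℂ ⊤ μ) (x : Lp ℂ ⊤ μ)
    (hxs_ball : ∀ k, ‖xs k‖ ≤ 1)
    (hxs_conv : ∀ k, ∃ f : Ω → ℂ, Measurable f ∧
      ∀ᵐ ω ∂μ, Tendsto (fun n => (a n (xs k) : Ω → ℂ) ω) atTop (𝓝 (f ω)))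
    (hx_ball : ‖x‖ ≤ 1)
    (hxs_x : TendstoInMeasure μ (fun k ω => (xs k : Ω → ℂ) ω) atTop (fun ω => (x : Ω → ℂ) ω)) :
    ∃ f : Ω → ℂ, Measurable f ∧
      ∀ᵐ ω ∂μ, Tendsto (fun n => (a n x : Ω → ℂ) ω) atTop (𝓝 (f ω)) :=
  stmt_10_general μ a ha_max xs x hxs_ball hxs_conv hx_ball hxs_x
end

section
/- (Commutative case of Lemma 2.1.) Let (Ω,Σ,μ) be a measure space, let (X,+) be a semigroup, and let a_n : X → L⁰(Ω,μ;ℂ) be a sequence of additive maps (a_n(x+y) = a_n(x) + a_n(y)). Assume x̄ ∈ X is such that for every ε > 0 there exist a sequence (x_k) in X and a measurable set P with μ(Ω∖P) ≤ ε such that: (i) for every k, the sequence (a_n(x̄ + x_k))_n converges almost uniformly; (ii) sup_n esssup_{ω∈P} |a_n(x_k)(ω)| → 0 as k → ∞. Then the sequence (a_n(x̄))_n converges almost uniformly. -/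
open MeasureTheory Filter Topology
open scoped ENNReal

/-- `gs n → g` almost uniformly: for every `ε > 0` there is a measurable set `E` with
`μ(Ω∖E) ≤ ε` on which `gs n → g` essentially uniformly. -/
def ConvAU {Ω : Type*} [MeasurableSpace Ω] (μ : Measure Ω) (gs : ℕ → Ω → ℂ) (g : Ω → ℂ) :
    Prop :=
  ∀ ε : ℝ, 0 < ε → ∃ E : Set Ω, MeasurableSet E ∧ μ Eᶜ ≤ ENNReal.ofReal ε ∧
    Filter.Tendsto (fun n => essSup (fun ω => (‖gs n ω - g ω‖₊ : ℝ≥0∞)) (μ.restrict E))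
      Filter.atTop (nhds 0)

/-! Off a set of small measure one can arrange simultaneously that `‖a_n(x_k)‖ ≤ δ_k` for all
`n, k`, with `δ_k → 0`, and that every `(a_n(x̄ + x_k))_n` converges uniformly: almost uniform
convergence becomes genuine uniform convergence after discarding a null set, and countably many
exceptional sets have summable measures. There additivity gives
`‖a_n(x̄) - a_n(x̄ + x_k)‖ ≤ δ_k` uniformly in `n`, so `(a_n(x̄))_n` is uniformly Cauchy, and its
pointwise limit is the almost uniform limit. -/

theorem UniformCauchySeqOn.of_edist_le {α β ι : Type*} [PseudoEMetricSpace β]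
    {F : ℕ → α → β} {G : ι → ℕ → α → β} {l : Filter ι} [l.NeBot] {δ : ι → ℝ≥0∞} {s : Set α}
    (hδ : Tendsto δ l (𝓝 0)) (hG : ∀ k, UniformCauchySeqOn (G k) atTop s)
    (hFG : ∀ k n, ∀ x ∈ s, edist (F n x) (G k n x) ≤ δ k) :
    UniformCauchySeqOn F atTop s := by
  intro u hu
  obtain ⟨ε, hε, hεu⟩ := mem_uniformity_edist.1 hu
  have hε3 : 0 < ε / 3 := ENNReal.div_pos hε.ne' ENNReal.ofNat_ne_top
  obtain ⟨k, hk⟩ := (hδ.eventually_lt_const hε3).exists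
  filter_upwards [hG k _ (edist_mem_uniformity hε3)] with mn hmn x hx
  refine hεu ?_
  calc edist (F mn.1 x) (F mn.2 x)
      ≤ edist (F mn.1 x) (G k mn.1 x) + edist (G k mn.1 x) (G k mn.2 x)
        + edist (G k mn.2 x) (F mn.2 x) := edist_triangle4 _ _ _ _
    _ < ε / 3 + ε / 3 + ε / 3 := by
      rw [edist_comm (G k mn.2 x)]
      exact ENNReal.add_lt_add (ENNReal.add_lt_add ((hFG k _ x hx).trans_lt hk) (hmn x hx))
        ((hFG k _ x hx).trans_lt hk)
    _ = ε := ENNReal.add_thirds ε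

theorem exists_measurableSet_subset_forall_of_ae {α : Type*} [MeasurableSpace α]
    {μ : Measure α} {s : Set α} (hs : MeasurableSet s) {p : α → Prop}
    (h : ∀ᵐ x ∂μ, x ∈ s → p x) :
    ∃ t ⊆ s, MeasurableSet t ∧ μ tᶜ ≤ μ sᶜ ∧ ∀ x ∈ t, p x := by
  obtain ⟨u, hu, hum, hup⟩ := h.exists_measurable_mem
  refine ⟨s ∩ u, Set.inter_subset_left, hs.inter hum, ?_, fun x hx => hup x hx.2 hx.1⟩
  rw [Set.compl_inter]
  exact (measure_union_le _ _).trans_eq (by rw [mem_ae_iff.1 hu, add_zero])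

section ConvAU

variable {Ω : Type*} [MeasurableSpace Ω] {μ : Measure Ω} {gs : ℕ → Ω → ℂ} {g : Ω → ℂ}

theorem convAU_of_tendstoUniformlyOn
    (h : ∀ ε : ℝ, 0 < ε → ∃ E : Set Ω, MeasurableSet E ∧ μ Eᶜ ≤ ENNReal.ofReal ε ∧
      TendstoUniformlyOn gs g atTop E) :
    ConvAU μ gs g := by
  intro ε hε
  obtain ⟨E, hEm, hEc, hE⟩ := h ε hε
  refine ⟨E, hEm, hEc, ENNReal.tendsto_nhds_zero.2 fun η hη => ?_⟩
  filter_upwards [EMetric.tendstoUniformlyOn_iff.1 hE η hη] with n hn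
  refine essSup_le_of_ae_le _ (ae_restrict_of_forall_mem hEm fun ω hω => ?_)
  simpa only [edist_comm, edist_eq_enorm_sub, enorm_eq_nnnorm] using (hn ω hω).le

theorem ConvAU.exists_tendstoUniformlyOn (h : ConvAU μ gs g) {ε : ℝ} (hε : 0 < ε) :
    ∃ E : Set Ω, MeasurableSet E ∧ μ Eᶜ ≤ ENNReal.ofReal ε ∧
      TendstoUniformlyOn gs g atTop E := by
  obtain ⟨E, hEm, hEc, hE⟩ := h ε hε
  have hae : ∀ᵐ ω ∂μ, ω ∈ E → ∀ n, (‖gs n ω - g ω‖₊ : ℝ≥0∞)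
      ≤ essSup (fun ω => (‖gs n ω - g ω‖₊ : ℝ≥0∞)) (μ.restrict E) :=
    (ae_restrict_iff' hEm).1 (ae_all_iff.2 fun n => ENNReal.ae_le_essSup _)
  obtain ⟨E', hE'E, hE'm, hE'c, hE'⟩ := exists_measurableSet_subset_forall_of_ae hEm hae
  refine ⟨E', hE'm, hE'c.trans hEc, EMetric.tendstoUniformlyOn_iff.2 fun η hη => ?_⟩
  filter_upwards [hE.eventually_lt_const hη] with n hn ω hω
  rw [edist_comm, edist_eq_enorm_sub, enorm_eq_nnnorm]
  exact (hE' ω hω n).trans_lt hn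

theorem exists_tendstoUniformlyOn_forall_of_convAU {ι : Type*} [Countable ι]
    {gs : ι → ℕ → Ω → ℂ} {g : ι → Ω → ℂ} (h : ∀ i, ConvAU μ (gs i) (g i)) {ε : ℝ}
    (hε : 0 < ε) :
    ∃ E : Set Ω, MeasurableSet E ∧ μ Eᶜ ≤ ENNReal.ofReal ε ∧
      ∀ i, TendstoUniformlyOn (gs i) (g i) atTop E := by
  obtain ⟨ε', hε'pos, hε'sum⟩ :=
    ENNReal.exists_pos_sum_of_countable (ENNReal.ofReal_pos.2 hε).ne' ι
  choose E hEm hEc hE using fun i => (h i).exists_tendstoUniformlyOn (hε'pos i)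
  refine ⟨⋂ i, E i, MeasurableSet.iInter hEm, ?_,
    fun i => (hE i).mono (Set.iInter_subset E i)⟩
  calc μ (⋂ i, E i)ᶜ = μ (⋃ i, (E i)ᶜ) := by rw [Set.compl_iInter]
    _ ≤ ∑' i, μ (E i)ᶜ := measure_iUnion_le _
    _ ≤ ∑' i, (ε' i : ℝ≥0∞) := ENNReal.tsum_le_tsum fun i => by simpa using hEc i
    _ ≤ ENNReal.ofReal ε := hε'sum.le

theorem exists_measurable_convAU_of_uniformCauchySeqOn (hgs : ∀ n, StronglyMeasurable (gs n))
    (h : ∀ ε : ℝ, 0 < ε → ∃ E : Set Ω, MeasurableSet E ∧ μ Eᶜ ≤ ENNReal.ofReal ε ∧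
      UniformCauchySeqOn gs atTop E) :
    ∃ g : Ω → ℂ, Measurable g ∧ ConvAU μ gs g := by
  refine ⟨fun ω => limUnder atTop (gs · ω), (StronglyMeasurable.limUnder hgs).measurable,
    convAU_of_tendstoUniformlyOn fun ε hε => ?_⟩
  obtain ⟨E, hEm, hEc, hE⟩ := h ε hε
  exact ⟨E, hEm, hEc,
    hE.tendstoUniformlyOn_of_tendsto fun ω hω => (hE.cauchySeq hω).tendsto_limUnder⟩

end ConvAU

theorem ae_edist_add_le_iSup_essSup {Ω X E : Type*} [MeasurableSpace Ω] {μ : Measure Ω}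
    [AddSemigroup X] [NormedAddCommGroup E] (a : ℕ → X → (Ω →ₘ[μ] E))
    (ha_add : ∀ n (x y : X), a n (x + y) = a n x + a n y) (x : X) (y : ℕ → X) {P : Set Ω}
    (hP : MeasurableSet P) :
    ∀ᵐ ω ∂μ, ω ∈ P → ∀ k n, edist ((a n x : Ω → E) ω) ((a n (x + y k) : Ω → E) ω)
      ≤ ⨆ m, essSup (fun ω => (‖(a m (y k) : Ω → E) ω‖₊ : ℝ≥0∞)) (μ.restrict P) := by
  have hadd : ∀ᵐ ω ∂μ, ∀ k n,
      (a n (x + y k) : Ω → E) ω = (a n x : Ω → E) ω + (a n (y k) : Ω → E) ω := by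
    simp only [ae_all_iff, ha_add]
    exact fun k n => AEEqFun.coeFn_add _ _
  have hbound : ∀ᵐ ω ∂μ, ω ∈ P → ∀ k n, (‖(a n (y k) : Ω → E) ω‖₊ : ℝ≥0∞)
      ≤ ⨆ m, essSup (fun ω => (‖(a m (y k) : Ω → E) ω‖₊ : ℝ≥0∞)) (μ.restrict P) := by
    refine (ae_restrict_iff' hP).1 (ae_all_iff.2 fun k => ae_all_iff.2 fun n => ?_)
    filter_upwards [ENNReal.ae_le_essSup fun ω => (‖(a n (y k) : Ω → E) ω‖₊ : ℝ≥0∞)] with ω hω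
    exact hω.trans (le_iSup_of_le n le_rfl)
  filter_upwards [hadd, hbound] with ω hω_add hω_bound hωP k n
  rw [hω_add, edist_eq_enorm_sub, sub_add_cancel_left, enorm_neg, enorm_eq_nnnorm]
  exact hω_bound hωP k n

/-- Lemma 2.1 (commutative): let `X` be a semigroup and `a_n : X → L⁰(Ω,μ;ℂ)` additive
maps. If `x̄ ∈ X` is such that for every `ε > 0` there are a sequence `(x_k) ⊆ X` and a
measurable set `P` with `μ(Ω∖P) ≤ ε` such that each `(a_n(x̄ + x_k))_n` converges almost
uniformly and `sup_n esssup_P |a_n(x_k)| → 0` as `k → ∞`, then `(a_n(x̄))_n` converges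
almost uniformly. -/
theorem stmt_13 {Ω : Type*} [MeasurableSpace Ω] (μ : Measure Ω)
    {X : Type*} [AddSemigroup X]
    (a : ℕ → X → (Ω →ₘ[μ] ℂ))
    (ha_add : ∀ n (x y : X), a n (x + y) = a n x + a n y)
    (xbar : X)
    (h : ∀ ε : ℝ, 0 < ε → ∃ (xk : ℕ → X) (P : Set Ω), MeasurableSet P ∧
      μ Pᶜ ≤ ENNReal.ofReal ε ∧
      (∀ k, ∃ g : Ω → ℂ, Measurable g ∧
        ConvAU μ (fun n ω => (a n (xbar + xk k) : Ω → ℂ) ω) g) ∧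
      Tendsto (fun k => ⨆ n,
          essSup (fun ω => (‖(a n (xk k) : Ω → ℂ) ω‖₊ : ℝ≥0∞)) (μ.restrict P))
        atTop (𝓝 0)) :
    ∃ g : Ω → ℂ, Measurable g ∧ ConvAU μ (fun n ω => (a n xbar : Ω → ℂ) ω) g := by
  refine exists_measurable_convAU_of_uniformCauchySeqOn
    (fun n => (a n xbar).stronglyMeasurable) fun ε hε => ?_
  obtain ⟨xk, P, hPm, hPc, hconv, hδ⟩ := h (ε / 2) (half_pos hε)
  choose gk _ hgk using hconv
  obtain ⟨E, hEm, hEc, hE⟩ := exists_tendstoUniformlyOn_forall_of_convAU hgk (half_pos hε)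
  obtain ⟨P', -, hP'm, hP'c, hP'⟩ := exists_measurableSet_subset_forall_of_ae hPm
    (ae_edist_add_le_iSup_essSup a ha_add xbar xk hPm)
  refine ⟨E ∩ P', hEm.inter hP'm, ?_, UniformCauchySeqOn.of_edist_le hδ
    (fun k => ((hE k).mono Set.inter_subset_left).uniformCauchySeqOn)
    fun k n ω hω => hP' ω hω.2 k n⟩
  calc μ (E ∩ P')ᶜ ≤ μ Eᶜ + μ P'ᶜ := by rw [Set.compl_inter]; exact measure_union_le _ _
    _ ≤ ENNReal.ofReal (ε / 2) + ENNReal.ofReal (ε / 2) := add_le_add hEc (hP'c.trans hPc)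
    _ = ENNReal.ofReal ε := by
      rw [← ENNReal.ofReal_add (half_pos hε).le (half_pos hε).le, add_halves]
end

section
/- (Commutative case of Theorem 3.6.) Let (Ω,Σ,μ) be a σ-finite measure space and let a_n : L^∞(Ω,μ;ℂ) → L⁰(Ω,μ;ℂ) be a sequence of linear maps such that: each a_n is positive (x ≥ 0 μ-a.e. implies a_n(x) ≥ 0 μ-a.e.); a_n(1) ≤ 1 μ-a.e. for all n; and each a_n is sequentially continuous with respect to the measure topology (if x_k, x ∈ L^∞ and x_k → x in the measure topology then a_n(x_k) → a_n(x) in the measure topology). If for every x ∈ L^∞ with ‖x‖_∞ ≤ 1 the sequence (a_n(x))_n converges almost uniformly, then (a_n) is uniformly equicontinuous at 0 on the unit ball { x ∈ L^∞ : ‖x‖_∞ ≤ 1 }. -/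
/-!
Write `d` for the Ky Fan metric of convergence in measure, for which the closed unit ball `B`
of `L^∞` is complete. Fix `ε, δ > 0`. Since `(a_n x)` converges almost uniformly, `B` is covered
by the sets `S_m` of those `x` for which `(a_n x)_{n ≥ m}` oscillates by at most `δ/8` off a set
of measure `ε/4`; since each `a_n` is continuous in measure, the `d`-closure of `S_m` satisfies
the same with `δ/4`. By Baire, one of these closures contains the trace on `B` of a `d`-ball
`B(x₀, ρ₀)`. Now an `x ∈ B` that is `γ`-small in measure splits as `x = (y - y') + v`, where
`y, y' ∈ B` coincide with `x₀` on `{|x| ≤ γ}` (so they lie in `B(x₀, ρ₀)`) and `|v| ≤ γ`. Then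
`a_n (y - y')` is small for `n ≤ m` by continuity of finitely many maps at `0` and for `n > m`
by the oscillation bounds for `y` and `y'`, while `|a_n v| ≤ 2γ` because `a_n` is positive with
`a_n 1 ≤ 1`.
-/

open MeasureTheory Filter Topology
open scoped ENNReal ComplexOrder

/-- `gs k → g` in the measure topology: for all `ε, δ > 0`, eventually in `k` there is a
measurable set `E` with `μ(Ω∖E) ≤ ε` and `|gs k − g| ≤ δ` a.e. on `E`. -/
def TendstoMeasTop {Ω : Type*} [MeasurableSpace Ω] (μ : Measure Ω)
    (gs : ℕ → Ω → ℂ) (g : Ω → ℂ) : Prop :=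
  ∀ ε δ : ℝ, 0 < ε → 0 < δ → ∃ K : ℕ, ∀ k ≥ K, ∃ E : Set Ω, MeasurableSet E ∧
    μ Eᶜ ≤ ENNReal.ofReal ε ∧ ∀ᵐ ω ∂μ.restrict E, ‖gs k ω - g ω‖ ≤ δ

/-- Uniform equicontinuity at `0` on `E ⊆ L^∞` of the maps `a_n : L^∞ → L⁰`. -/
def UnifEquicont {Ω : Type*} [MeasurableSpace Ω] (μ : Measure Ω)
    (a : ℕ → (Lp ℂ ⊤ μ) → (Ω →ₘ[μ] ℂ)) (E : Set (Lp ℂ ⊤ μ)) : Prop :=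
  ∀ ε δ : ℝ, 0 < ε → 0 < δ → ∃ γ : ℝ, 0 < γ ∧ ∀ x ∈ E,
    (∃ F : Set Ω, MeasurableSet F ∧ μ Fᶜ ≤ ENNReal.ofReal γ ∧
      ∀ᵐ ω ∂μ.restrict F, ‖(x : Ω → ℂ) ω‖ ≤ γ) →
    ∃ G : Set Ω, MeasurableSet G ∧ μ Gᶜ ≤ ENNReal.ofReal ε ∧
      ∀ n, essSup (fun ω => (‖(a n x : Ω → ℂ) ω‖₊ : ℝ≥0∞)) (μ.restrict G) ≤
        ENNReal.ofReal δ

namespace BanachPrinciple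

section KyFan

variable {Ω E : Type*} [MeasurableSpace Ω] {μ : Measure Ω} [NormedAddCommGroup E]

/-- `f` and `g` are `c`-close for the Ky Fan metric, which metrizes convergence in measure. -/
def KyFanClose (μ : Measure Ω) (f g : Ω → E) (c : ℝ) : Prop :=
  μ {ω | c < ‖f ω - g ω‖} ≤ ENNReal.ofReal c

theorem KyFanClose.mono {f g : Ω → E} {c c' : ℝ} (h : KyFanClose μ f g c) (hcc' : c ≤ c') :
    KyFanClose μ f g c' :=
  (measure_mono fun _ hω => hcc'.trans_lt hω).trans (h.trans (ENNReal.ofReal_le_ofReal hcc'))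

theorem KyFanClose.congr {f f' g g' : Ω → E} {c : ℝ} (h : KyFanClose μ f g c)
    (hf : f =ᵐ[μ] f') (hg : g =ᵐ[μ] g') : KyFanClose μ f' g' c := by
  refine le_of_eq_of_le (measure_congr ?_) h
  filter_upwards [hf, hg] with ω hfω hgω
  change (c < ‖f' ω - g' ω‖) = (c < ‖f ω - g ω‖)
  rw [hfω, hgω]

theorem kyFanClose_of_ae_eq_on {f g : Ω → E} {F : Set Ω} {c : ℝ} (hc : 0 ≤ c)
    (hF : μ Fᶜ ≤ ENNReal.ofReal c) (h : ∀ᵐ ω ∂μ, ω ∈ F → f ω = g ω) : KyFanClose μ f g c := by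
  refine (measure_mono_ae ?_).trans hF
  filter_upwards [h] with ω hω hlt hωF
  change c < ‖f ω - g ω‖ at hlt
  rw [hω hωF, sub_self, norm_zero] at hlt
  exact hlt.not_ge hc

theorem le_mul_pow_of_le_div_four {ρ : ℕ → ℝ} (hρ : ∀ k, ρ (k + 1) ≤ ρ k / 4) (m j : ℕ) :
    ρ (m + j) ≤ ρ m * (1 / 4) ^ j := by
  induction j with
  | zero => simp
  | succ j ih =>
    calc ρ (m + (j + 1)) ≤ ρ (m + j) / 4 := hρ _
      _ ≤ ρ m * (1 / 4) ^ (j + 1) := by rw [pow_succ]; linarith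

theorem tsum_measure_le_of_kyFanClose {y : ℕ → Ω → E} {ρ : ℕ → ℝ} (hρ : ∀ k, 0 < ρ k)
    (hρ_succ : ∀ k, ρ (k + 1) ≤ ρ k / 4) (hclose : ∀ k, KyFanClose μ (y (k + 1)) (y k) (ρ k / 4))
    (m : ℕ) :
    ∑' j, μ {ω | ρ (m + j) / 4 < ‖y (m + j + 1) ω - y (m + j) ω‖} ≤ ENNReal.ofReal (ρ m / 3) :=
  calc ∑' j, μ {ω | ρ (m + j) / 4 < ‖y (m + j + 1) ω - y (m + j) ω‖}
      ≤ ∑' j : ℕ, ENNReal.ofReal (ρ m / 4 * (1 / 4) ^ j) :=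
        ENNReal.tsum_le_tsum fun j => (hclose (m + j)).trans
          (ENNReal.ofReal_le_ofReal (by linarith [le_mul_pow_of_le_div_four hρ_succ m j]))
    _ = ENNReal.ofReal (ρ m / 3) := by
        rw [← ENNReal.ofReal_tsum_of_nonneg (fun j => by have := hρ m; positivity)
          ((summable_geometric_of_lt_one (by norm_num) (by norm_num)).mul_left _),
          tsum_mul_left, tsum_geometric_of_lt_one (by norm_num) (by norm_num)]
        ring_nf

end KyFan

section ConvergenceInMeasure

variable {Ω E : Type*} [MeasurableSpace Ω] {μ : Measure Ω} [NormedAddCommGroup E]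

theorem measure_le_measure_compl_of_ae_restrict {G S : Set Ω} (hG : MeasurableSet G)
    (h : ∀ᵐ ω ∂μ.restrict G, ω ∉ S) : μ S ≤ μ Gᶜ :=
  measure_mono_ae <| by
    filter_upwards [(ae_restrict_iff' hG).1 h] with ω hω hS using fun hωG => hω hωG hS

theorem exists_measurableSet_measure_compl_eq (S : Set Ω) :
    ∃ G, MeasurableSet G ∧ μ Gᶜ = μ S ∧ ∀ ω ∈ G, ω ∉ S :=
  ⟨(toMeasurable μ S)ᶜ, (measurableSet_toMeasurable μ S).compl,
    by rw [compl_compl, measure_toMeasurable],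
    fun _ hω hS => hω (subset_toMeasurable μ S hS)⟩

theorem tendstoMeasTop_iff {gs : ℕ → Ω → ℂ} {g : Ω → ℂ} :
    TendstoMeasTop μ gs g ↔
      ∀ δ : ℝ, 0 < δ → Tendsto (fun k => μ {ω | δ < ‖gs k ω - g ω‖}) atTop (𝓝 0) := by
  constructor
  · intro h δ hδ
    refine ENNReal.tendsto_nhds_zero.2 fun ε hε => ?_
    obtain ⟨r, -, hr, hrε⟩ := ENNReal.lt_iff_exists_real_btwn.1 hε
    obtain ⟨K, hK⟩ := h r δ (ENNReal.ofReal_pos.1 hr) hδ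
    filter_upwards [eventually_ge_atTop K] with k hk
    obtain ⟨E, hE, hEμ, hgE⟩ := hK k hk
    refine (measure_le_measure_compl_of_ae_restrict hE ?_).trans (hEμ.trans hrε.le)
    filter_upwards [hgE] with ω hω using hω.not_gt
  · intro h ε δ hε hδ
    obtain ⟨K, hK⟩ := eventually_atTop.1
      (ENNReal.tendsto_nhds_zero.1 (h δ hδ) (ENNReal.ofReal ε) (ENNReal.ofReal_pos.2 hε))
    refine ⟨K, fun k hk => ?_⟩
    obtain ⟨E, hE, hEμ, hES⟩ := exists_measurableSet_measure_compl_eq (μ := μ)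
      {ω | δ < ‖gs k ω - g ω‖}
    exact ⟨E, hE, hEμ ▸ hK k hk, ae_restrict_of_forall_mem hE fun ω hω => not_lt.1 (hES ω hω)⟩

theorem tendstoMeasTop_of_kyFanClose {gs : ℕ → Ω → ℂ} {g : Ω → ℂ} {ρ : ℕ → ℝ}
    (hρ : Tendsto ρ atTop (𝓝 0)) (h : ∀ k, KyFanClose μ (gs k) g (ρ k)) :
    TendstoMeasTop μ gs g := by
  refine tendstoMeasTop_iff.2 fun δ hδ => ENNReal.tendsto_nhds_zero.2 fun ε hε => ?_
  have hρ' : Tendsto (fun k => ENNReal.ofReal (ρ k)) atTop (𝓝 0) := by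
    simpa using ENNReal.tendsto_ofReal hρ
  filter_upwards [ENNReal.tendsto_nhds_zero.1 hρ' ε hε, hρ.eventually (eventually_le_nhds hδ)]
    with k hkε hkδ
  exact (measure_mono fun ω hω => hkδ.trans_lt hω).trans ((h k).trans hkε)

theorem eventually_measure_biUnion_le_of_tendstoMeasTop {ι : Type*} {F : ℕ → ι → Ω → ℂ}
    {f : ι → Ω → ℂ} (J : Finset ι) (hF : ∀ j ∈ J, TendstoMeasTop μ (fun k => F k j) (f j))
    {δ : ℝ} (hδ : 0 < δ) {ε : ℝ≥0∞} (hε : 0 < ε) :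
    ∀ᶠ k in atTop, μ (⋃ j ∈ J, {ω | δ < ‖F k j ω - f j ω‖}) ≤ ε := by
  have hsum : Tendsto (fun k => ∑ j ∈ J, μ {ω | δ < ‖F k j ω - f j ω‖}) atTop (𝓝 0) := by
    simpa using tendsto_finsetSum J fun j hj => tendstoMeasTop_iff.1 (hF j hj) δ hδ
  filter_upwards [ENNReal.tendsto_nhds_zero.1 hsum ε hε] with k hk
  exact (measure_biUnion_finset_le J _).trans hk

theorem exists_measurableSet_forall_essSup_le {f : ℕ → Ω → E} {δ : ℝ} {c : ℝ≥0∞}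
    (h : μ {ω | ∃ n, δ < ‖f n ω‖} ≤ c) :
    ∃ G, MeasurableSet G ∧ μ Gᶜ ≤ c ∧
      ∀ n, essSup (fun ω => (‖f n ω‖₊ : ℝ≥0∞)) (μ.restrict G) ≤ ENNReal.ofReal δ := by
  obtain ⟨G, hG, hGμ, hGS⟩ := exists_measurableSet_measure_compl_eq (μ := μ)
    {ω | ∃ n, δ < ‖f n ω‖}
  refine ⟨G, hG, hGμ ▸ h, fun n => essSup_le_of_ae_le _
    (ae_restrict_of_forall_mem hG fun ω hω => ?_)⟩
  change (‖f n ω‖₊ : ℝ≥0∞) ≤ ENNReal.ofReal δ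
  rw [← enorm_eq_nnnorm, ← ofReal_norm]
  exact ENNReal.ofReal_le_ofReal (not_lt.1 fun hlt => hGS ω hω ⟨n, hlt⟩)

end ConvergenceInMeasure

section Linfty

variable {Ω E : Type*} [MeasurableSpace Ω] {μ : Measure Ω} [NormedAddCommGroup E]

theorem norm_le_iff_ae_norm_le (f : Lp E ⊤ μ) {c : ℝ} (hc : 0 ≤ c) :
    ‖f‖ ≤ c ↔ ∀ᵐ ω ∂μ, ‖f ω‖ ≤ c := by
  have hnorm : ∀ z : E, ‖z‖ₑ ≤ ENNReal.ofReal c ↔ ‖z‖ ≤ c := fun z => by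
    rw [← ofReal_norm, ENNReal.ofReal_le_ofReal_iff hc]
  rw [Lp.norm_def, ← ENNReal.le_ofReal_iff_toReal_le (Lp.eLpNorm_ne_top f) hc,
    eLpNorm_exponent_top]
  constructor
  · intro h
    filter_upwards [ae_le_eLpNormEssSup (f := f)] with ω hω using (hnorm _).1 (hω.trans h)
  · intro h
    exact eLpNormEssSup_le_of_ae_enorm_bound (by filter_upwards [h] with ω hω using (hnorm _).2 hω)

theorem exists_ae_eq_piecewise {p : ℝ≥0∞} (f g : Lp E p μ) {F : Set Ω} (hF : MeasurableSet F) :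
    ∃ h : Lp E p μ, ∀ᵐ ω ∂μ, (ω ∈ F → h ω = f ω) ∧ (ω ∉ F → h ω = g ω) := by
  classical
  have hmem : MemLp (F.piecewise (f : Ω → E) g) p μ :=
    ((Lp.memLp f).restrict F).piecewise hF ((Lp.memLp g).restrict Fᶜ)
  refine ⟨hmem.toLp _, ?_⟩
  filter_upwards [hmem.coeFn_toLp] with ω hω
  exact ⟨fun hωF => by rw [hω, F.piecewise_eq_of_mem _ _ hωF],
    fun hωF => by rw [hω, F.piecewise_eq_of_notMem _ _ hωF]⟩

theorem exists_eq_sub_add_of_kyFanClose_zero {x₀ x : Lp E ⊤ μ} {R γ : ℝ} (hx₀ : ‖x₀‖ ≤ R)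
    (hx : ‖x‖ ≤ R) (hγ : 0 ≤ γ) (hxγ : KyFanClose μ x 0 γ) :
    ∃ y y' v : Lp E ⊤ μ, x = y - y' + v ∧ ‖y‖ ≤ R ∧ ‖y'‖ ≤ R ∧
      KyFanClose μ y x₀ γ ∧ KyFanClose μ y' x₀ γ ∧ KyFanClose μ (y - y') 0 γ ∧
      ∀ᵐ ω ∂μ, ‖v ω‖ ≤ γ := by
  have hR : 0 ≤ R := (norm_nonneg _).trans hx
  set F := {ω | ‖x ω‖ ≤ γ}
  have hF : MeasurableSet F :=
    measurableSet_le (Lp.stronglyMeasurable x).norm.measurable measurable_const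
  have hFc : μ Fᶜ ≤ ENNReal.ofReal γ := le_of_eq_of_le (congrArg μ (by ext; simp [F])) hxγ
  obtain ⟨y, hy⟩ := exists_ae_eq_piecewise x₀ x hF
  obtain ⟨y', hy'⟩ := exists_ae_eq_piecewise x₀ 0 hF
  have hsub : ∀ᵐ ω ∂μ, (ω ∈ F → (y - y') ω = 0) ∧ (ω ∉ F → (y - y') ω = x ω) := by
    filter_upwards [hy, hy', Lp.coeFn_sub y y', Lp.coeFn_zero E ⊤ μ] with ω h h' hsub h0
    rw [hsub, Pi.sub_apply]
    exact ⟨fun hω => by rw [h.1 hω, h'.1 hω, sub_self],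
      fun hω => by rw [h.2 hω, h'.2 hω, h0, Pi.zero_apply, sub_zero]⟩
  have hx₀' := (norm_le_iff_ae_norm_le x₀ hR).1 hx₀
  refine ⟨y, y', x - (y - y'), by abel, ?_, ?_,
    kyFanClose_of_ae_eq_on hγ hFc (hy.mono fun _ h => h.1),
    kyFanClose_of_ae_eq_on hγ hFc (hy'.mono fun _ h => h.1),
    kyFanClose_of_ae_eq_on hγ hFc (hsub.mono fun _ h => h.1), ?_⟩
  · refine (norm_le_iff_ae_norm_le y hR).2 ?_
    filter_upwards [hy, hx₀', (norm_le_iff_ae_norm_le x hR).1 hx] with ω h h₀ h₁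
    by_cases hω : ω ∈ F
    exacts [h.1 hω ▸ h₀, h.2 hω ▸ h₁]
  · refine (norm_le_iff_ae_norm_le y' hR).2 ?_
    filter_upwards [hy', hx₀', Lp.coeFn_zero E ⊤ μ] with ω h h₀ h₁
    by_cases hω : ω ∈ F
    · exact h.1 hω ▸ h₀
    · rw [h.2 hω, h₁, Pi.zero_apply, norm_zero]
      exact hR
  · filter_upwards [Lp.coeFn_sub x (y - y'), hsub] with ω h h'
    rw [h, Pi.sub_apply]
    by_cases hω : ω ∈ F
    · rw [h'.1 hω, sub_zero]
      exact hω
    · rw [h'.2 hω, sub_self, norm_zero]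
      exact hγ

end Linfty

section Completeness

variable {Ω E : Type*} [NormedAddCommGroup E] [CompleteSpace E]

theorem exists_tendsto_norm_sub_le_of_geometric {u : ℕ → E} {c r : ℝ} (hr : r < 1)
    (h : ∀ j, ‖u (j + 1) - u j‖ ≤ c * r ^ j) :
    ∃ L, Tendsto u atTop (𝓝 L) ∧ ‖L - u 0‖ ≤ c / (1 - r) := by
  have h' : ∀ j, dist (u j) (u (j + 1)) ≤ c * r ^ j := fun j => by
    rw [dist_comm, dist_eq_norm]
    exact h j
  obtain ⟨L, hL⟩ := cauchySeq_tendsto_of_complete (cauchySeq_of_le_geometric r c hr h')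
  refine ⟨L, hL, ?_⟩
  rw [← dist_eq_norm, dist_comm]
  exact dist_le_of_le_geometric_of_tendsto₀ r c hr h' hL

theorem tendsto_limUnder_and_norm_sub_le {u : ℕ → E} {ρ : ℕ → ℝ}
    (hρ : ∀ k, ρ (k + 1) ≤ ρ k / 4) {m : ℕ}
    (hu : ∀ j, ‖u (m + j + 1) - u (m + j)‖ ≤ ρ (m + j) / 4) :
    Tendsto u atTop (𝓝 (limUnder atTop u)) ∧ ‖limUnder atTop u - u m‖ ≤ ρ m / 3 := by
  obtain ⟨L, hL, hLm⟩ := exists_tendsto_norm_sub_le_of_geometric (u := fun j => u (m + j))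
    (c := ρ m / 4) (r := 1 / 4) (by norm_num) fun j => by
      rw [← add_assoc]
      linarith [hu j, le_mul_pow_of_le_div_four hρ m j]
  have hL' : Tendsto u atTop (𝓝 L) :=
    (tendsto_add_atTop_iff_nat m).1 (by simpa only [add_comm] using hL)
  rw [hL'.limUnder_eq]
  exact ⟨hL', hLm.trans_eq (by norm_num [div_div_eq_mul_div])⟩

variable [MeasurableSpace Ω] {μ : Measure Ω}

theorem ae_tendsto_limUnder_and_kyFanClose {y : ℕ → Ω → E} {ρ : ℕ → ℝ} (hρ : ∀ k, 0 < ρ k)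
    (hρ_succ : ∀ k, ρ (k + 1) ≤ ρ k / 4) (hclose : ∀ k, KyFanClose μ (y (k + 1)) (y k) (ρ k / 4)) :
    (∀ᵐ ω ∂μ, Tendsto (fun k => y k ω) atTop (𝓝 (limUnder atTop fun k => y k ω))) ∧
      ∀ m, KyFanClose μ (fun ω => limUnder atTop fun k => y k ω) (y m) (ρ m) := by
  set D : ℕ → Set Ω := fun k => {ω | ρ k / 4 < ‖y (k + 1) ω - y k ω‖}
  have hD := tsum_measure_le_of_kyFanClose hρ hρ_succ hclose
  have hpt : ∀ m ω, ω ∉ ⋃ j, D (m + j) →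
      Tendsto (fun k => y k ω) atTop (𝓝 (limUnder atTop fun k => y k ω)) ∧
        ‖(limUnder atTop fun k => y k ω) - y m ω‖ ≤ ρ m / 3 := fun m ω hω =>
    tendsto_limUnder_and_norm_sub_le hρ_succ fun j =>
      not_lt.1 fun h => hω (Set.mem_iUnion.2 ⟨j, h⟩)
  refine ⟨?_, fun m => ?_⟩
  · have hsum : ∑' j, μ (D j) ≠ ∞ :=
      ne_top_of_le_ne_top ENNReal.ofReal_ne_top (by simpa using hD 0)
    filter_upwards [ae_eventually_notMem hsum] with ω hω
    obtain ⟨M, hM⟩ := eventually_atTop.1 hω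
    exact (hpt M ω (by simpa using fun j => hM (M + j) (Nat.le_add_right M j))).1
  refine (measure_mono fun ω hω => ?_).trans ((measure_iUnion_le _).trans
    ((hD m).trans (ENNReal.ofReal_le_ofReal (by linarith [hρ m]))))
  by_contra hω'
  exact (hpt m ω hω').2.not_gt (lt_of_le_of_lt (by linarith [hρ m]) hω)

theorem exists_kyFanClose_limit {y : ℕ → Lp E ⊤ μ} {ρ : ℕ → ℝ} {R : ℝ}
    (hy : ∀ k, ‖y k‖ ≤ R) (hρ : ∀ k, 0 < ρ k) (hρ_succ : ∀ k, ρ (k + 1) ≤ ρ k / 4)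
    (hclose : ∀ k, KyFanClose μ (y (k + 1)) (y k) (ρ k / 4)) :
    ∃ x : Lp E ⊤ μ, ‖x‖ ≤ R ∧ ∀ k, KyFanClose μ x (y k) (ρ k) := by
  have hR : 0 ≤ R := (norm_nonneg _).trans (hy 0)
  obtain ⟨hlim, hlim_close⟩ :=
    ae_tendsto_limUnder_and_kyFanClose (μ := μ) (y := fun k => y k) hρ hρ_succ hclose
  set g : Ω → E := fun ω => limUnder atTop fun k => y k ω
  have hg_le : ∀ᵐ ω ∂μ, ‖g ω‖ ≤ R := by
    filter_upwards [hlim, ae_all_iff.2 fun k => (norm_le_iff_ae_norm_le (y k) hR).1 (hy k)]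
      with ω hω hyω
    exact le_of_tendsto' hω.norm hyω
  have hg : MemLp g ⊤ μ := memLp_top_of_bound
    (aestronglyMeasurable_of_tendsto_ae atTop (fun k => Lp.aestronglyMeasurable (y k)) hlim)
    R hg_le
  refine ⟨hg.toLp g, (norm_le_iff_ae_norm_le _ hR).2 ?_, fun m =>
    (hlim_close m).congr hg.coeFn_toLp.symm EventuallyEq.rfl⟩
  filter_upwards [hg.coeFn_toLp, hg_le] with ω hω hgω
  rwa [hω]

/-- Baire category for the closed unit ball of `L^∞`, which is complete for the Ky Fan metric
(`exists_kyFanClose_limit`); `T m` is any superset of the Ky Fan closure of `S m`. -/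
theorem exists_kyFanClose_subset_of_forall_exists_mem {S T : ℕ → Set (Lp E ⊤ μ)}
    (hS : ∀ x : Lp E ⊤ μ, ‖x‖ ≤ 1 → ∃ m, x ∈ S m)
    (hT : ∀ m (y : Lp E ⊤ μ), ‖y‖ ≤ 1 → (∀ r > 0, ∃ z ∈ S m, KyFanClose μ z y r) → y ∈ T m) :
    ∃ m, ∃ x₀ : Lp E ⊤ μ, ∃ ρ₀ > 0, ‖x₀‖ ≤ 1 ∧
      ∀ y : Lp E ⊤ μ, ‖y‖ ≤ 1 → KyFanClose μ y x₀ ρ₀ → y ∈ T m := by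
  by_contra! h
  have hstep : ∀ m (p : Lp E ⊤ μ × ℝ), ‖p.1‖ ≤ 1 → 0 < p.2 → ∃ q : Lp E ⊤ μ × ℝ,
      ‖q.1‖ ≤ 1 ∧ 0 < q.2 ∧ q.2 ≤ p.2 / 4 ∧ KyFanClose μ q.1 p.1 (p.2 / 4) ∧
        ∀ z ∈ S m, ¬ KyFanClose μ z q.1 q.2 := by
    intro m p hp hpos
    obtain ⟨y, hy, hyp, hyT⟩ := h m p.1 (p.2 / 4) (by positivity) hp
    obtain ⟨r, hr, hrS⟩ : ∃ r > 0, ∀ z ∈ S m, ¬ KyFanClose μ z y r := by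
      by_contra! hr
      exact hyT (hT m y hy hr)
    exact ⟨(y, min r (p.2 / 4)), hy, by positivity, min_le_right _ _, hyp,
      fun z hz hzy => hrS z hz (hzy.mono (min_le_left _ _))⟩
  choose! next hnext using hstep
  let seq : ℕ → Lp E ⊤ μ × ℝ := fun k => Nat.rec (0, 1) next k
  have hseq : ∀ k, ‖(seq k).1‖ ≤ 1 ∧ 0 < (seq k).2 := by
    intro k
    induction k with
    | zero => simp [seq]
    | succ k ih => exact ⟨(hnext k _ ih.1 ih.2).1, (hnext k _ ih.1 ih.2).2.1⟩
  have hseq_next := fun k => hnext k (seq k) (hseq k).1 (hseq k).2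
  obtain ⟨x, hx, hxseq⟩ := exists_kyFanClose_limit (fun k => (hseq k).1) (fun k => (hseq k).2)
    (fun k => (hseq_next k).2.2.1) (fun k => (hseq_next k).2.2.2.1)
  obtain ⟨m, hm⟩ := hS x hx
  exact (hseq_next m).2.2.2.2 x hm (hxseq (m + 1))

end Completeness

section TailOscillation

variable {Ω E : Type*} [NormedAddCommGroup E]

def tailOscSet (f : ℕ → Ω → E) (m : ℕ) (s : ℝ) : Set Ω :=
  {ω | ∃ n ≥ m, ∃ l ≥ m, s < ‖f n ω - f l ω‖}

theorem tailOscSet_sub_subset (f g : ℕ → Ω → E) (m : ℕ) (s t : ℝ) :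
    tailOscSet (f - g) m (s + t) ⊆ tailOscSet f m s ∪ tailOscSet g m t := by
  rintro ω ⟨n, hn, l, hl, hlt⟩
  have h : s + t < ‖f n ω - f l ω‖ + ‖g n ω - g l ω‖ :=
    hlt.trans_le (by simpa only [Pi.sub_apply, sub_sub_sub_comm] using norm_sub_le _ _)
  rcases lt_or_lt_of_add_lt_add h with h | h
  exacts [Or.inl ⟨n, hn, l, hl, h⟩, Or.inr ⟨n, hn, l, hl, h⟩]

theorem setOf_exists_lt_norm_subset (f : ℕ → Ω → E) (m : ℕ) {δ s : ℝ} (hs : 0 ≤ s) :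
    {ω | ∃ n, δ + s < ‖f n ω‖} ⊆
      (⋃ n ∈ Finset.range (m + 1), {ω | δ < ‖f n ω‖}) ∪ tailOscSet f m s := by
  rintro ω ⟨n, hn⟩
  rcases le_or_gt n m with hnm | hmn
  · exact Or.inl (Set.mem_biUnion (Finset.mem_range.2 (Nat.lt_succ_of_le hnm))
      (show δ < ‖f n ω‖ by linarith))
  by_cases hfm : δ < ‖f m ω‖
  · exact Or.inl (Set.mem_biUnion (Finset.mem_range.2 (Nat.lt_succ_self m)) hfm)
  refine Or.inr ⟨n, hmn.le, m, le_rfl, ?_⟩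
  linarith [norm_sub_norm_le (f n ω) (f m ω), not_lt.1 hfm]

variable [MeasurableSpace Ω] {μ : Measure Ω}

theorem exists_measure_tailOscSet_le_of_convAU {f : ℕ → Ω → ℂ} {g : Ω → ℂ} (h : ConvAU μ f g)
    {s ε : ℝ} (hs : 0 < s) (hε : 0 < ε) : ∃ m, μ (tailOscSet f m s) ≤ ENNReal.ofReal ε := by
  obtain ⟨E, hE, hEμ, hlim⟩ := h ε hε
  obtain ⟨m, hm⟩ := eventually_atTop.1
    (hlim.eventually (gt_mem_nhds (ENNReal.ofReal_pos.2 (half_pos hs))))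
  have hae : ∀ᵐ ω ∂μ.restrict E, ∀ n ≥ m, ‖f n ω - g ω‖ < s / 2 := by
    refine (ae_ball_iff (Set.to_countable (Set.Ici m))).2 fun n hn => ?_
    filter_upwards [ae_lt_of_essSup_lt (hm n hn)] with ω hω
    rwa [← enorm_eq_nnnorm, ← ofReal_norm, ENNReal.ofReal_lt_ofReal_iff (half_pos hs)] at hω
  refine ⟨m, (measure_le_measure_compl_of_ae_restrict hE ?_).trans hEμ⟩
  filter_upwards [hae] with ω hω ⟨n, hn, l, hl, hnl⟩
  have := norm_sub_le_norm_sub_add_norm_sub (f n ω) (g ω) (f l ω)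
  rw [norm_sub_rev (g ω)] at this
  linarith [hω n hn, hω l hl]

theorem measure_tailOscSet_le_of_tendstoMeasTop {F : ℕ → ℕ → Ω → ℂ} {f : ℕ → Ω → ℂ}
    (hF : ∀ n, TendstoMeasTop μ (fun k => F k n) (f n)) {m : ℕ} {s : ℝ} (hs : 0 < s)
    {c : ℝ≥0∞} (hc : ∀ k, μ (tailOscSet (F k) m s) ≤ c) :
    μ (tailOscSet f m (2 * s)) ≤ c := by
  set B : ℕ → Set Ω := fun N => {ω | ∃ n ≥ m, ∃ l ≥ m, n ≤ N ∧ l ≤ N ∧ 2 * s < ‖f n ω - f l ω‖}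
  have hB : tailOscSet f m (2 * s) = ⋃ N, B N := by
    ext ω
    simp only [tailOscSet, B, Set.mem_iUnion]
    exact ⟨fun ⟨n, hn, l, hl, h⟩ => ⟨max n l, n, hn, l, hl, le_max_left _ _, le_max_right _ _, h⟩,
      fun ⟨_, n, hn, l, hl, _, _, h⟩ => ⟨n, hn, l, hl, h⟩⟩
  have hB_mono : Monotone B := fun N N' hN ω ⟨n, hn, l, hl, hnN, hlN, h⟩ =>
    ⟨n, hn, l, hl, hnN.trans hN, hlN.trans hN, h⟩
  rw [hB, hB_mono.measure_iUnion]
  refine iSup_le fun N => ENNReal.le_of_forall_pos_le_add fun θ hθ _ => ?_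
  -- on the finitely many indices `≤ N`, `F k` is uniformly `s/2`-close to `f` off a small set
  obtain ⟨k, hk⟩ := (eventually_measure_biUnion_le_of_tendstoMeasTop (Finset.range (N + 1))
    (fun n _ => hF n) (half_pos hs) (ENNReal.coe_pos.2 hθ)).exists
  refine (measure_mono ?_).trans ((measure_union_le _ _).trans (add_le_add (hc k) hk))
  rintro ω ⟨n, hn, l, hl, hnN, hlN, hnl⟩
  rw [Set.mem_union, or_iff_not_imp_right]
  intro hω
  simp only [Set.mem_iUnion, Finset.mem_range, not_exists] at hω
  have key : ‖f n ω - f l ω‖ ≤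
      ‖F k n ω - F k l ω‖ + ‖F k n ω - f n ω‖ + ‖F k l ω - f l ω‖ :=
    calc ‖f n ω - f l ω‖ = ‖(F k n ω - F k l ω) - (F k n ω - f n ω) + (F k l ω - f l ω)‖ := by
          congr 1; abel
      _ ≤ _ := (norm_add_le _ _).trans (by gcongr; exact norm_sub_le _ _)
  have hFn : ‖F k n ω - f n ω‖ ≤ s / 2 := not_lt.1 (hω n (by omega))
  have hFl : ‖F k l ω - f l ω‖ ≤ s / 2 := not_lt.1 (hω l (by omega))
  exact ⟨n, hn, l, hl, by linarith⟩

end TailOscillation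

section AlmostCauchy

variable {Ω E : Type*} [MeasurableSpace Ω] {μ : Measure Ω} [NormedAddCommGroup E]

def almostCauchySet {X : Type*} (a : ℕ → X → Ω →ₘ[μ] E) (m : ℕ) (s : ℝ) (c : ℝ≥0∞) : Set X :=
  {x | μ (tailOscSet (fun n => (a n x : Ω → E)) m s) ≤ c}

theorem sub_mem_almostCauchySet {X F : Type*} [AddGroup X] [FunLike F X (Ω →ₘ[μ] E)]
    [AddMonoidHomClass F X (Ω →ₘ[μ] E)] {a : ℕ → F} {m : ℕ} {s t : ℝ} {c d : ℝ≥0∞} {x y : X}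
    (hx : x ∈ almostCauchySet (fun n => a n) m s c)
    (hy : y ∈ almostCauchySet (fun n => a n) m t d) :
    x - y ∈ almostCauchySet (fun n => a n) m (s + t) (c + d) := by
  have hae : ∀ᵐ ω ∂μ, ∀ n, (a n (x - y) : Ω → E) ω = (a n x : Ω → E) ω - (a n y : Ω → E) ω :=
    ae_all_iff.2 fun n => by rw [map_sub]; exact AEEqFun.coeFn_sub _ _
  calc μ (tailOscSet (fun n => (a n (x - y) : Ω → E)) m (s + t))
      ≤ μ (tailOscSet ((fun n => (a n x : Ω → E)) - fun n => (a n y : Ω → E)) m (s + t)) :=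
        measure_mono_ae <| by
          filter_upwards [hae] with ω hω using
            fun ⟨n, hn, l, hl, h⟩ => ⟨n, hn, l, hl, by simpa only [Pi.sub_apply, ← hω] using h⟩
    _ ≤ c + d := (measure_mono (tailOscSet_sub_subset _ _ m s t)).trans
        ((measure_union_le _ _).trans (add_le_add hx hy))

theorem mem_almostCauchySet_of_forall_kyFanClose (a : ℕ → Lp ℂ ⊤ μ → Ω →ₘ[μ] ℂ)
    {y : Lp ℂ ⊤ μ} (ha : ∀ n (xs : ℕ → Lp ℂ ⊤ μ),
      TendstoMeasTop μ (fun k ω => (xs k : Ω → ℂ) ω) (fun ω => (y : Ω → ℂ) ω) →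
      TendstoMeasTop μ (fun k ω => (a n (xs k) : Ω → ℂ) ω) (fun ω => (a n y : Ω → ℂ) ω))
    {m : ℕ} {s : ℝ} (hs : 0 < s) {c : ℝ≥0∞}
    (hy : ∀ r > 0, ∃ z ∈ almostCauchySet a m s c, KyFanClose μ z y r) :
    y ∈ almostCauchySet a m (2 * s) c := by
  choose z hz hzy using fun k : ℕ => hy (1 / (k + 1)) Nat.one_div_pos_of_nat
  exact measure_tailOscSet_le_of_tendstoMeasTop (fun n => ha n z
    (tendstoMeasTop_of_kyFanClose tendsto_one_div_add_atTop_nhds_zero_nat hzy)) hs hz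

theorem measure_setOf_exists_lt_norm_map_add_le {X F : Type*} [AddGroup X]
    [FunLike F X (Ω →ₘ[μ] E)] [AddMonoidHomClass F X (Ω →ₘ[μ] E)] {a : ℕ → F} {m : ℕ}
    {w v : X} {δ s η ε : ℝ} (hs : 0 ≤ s) (hε : δ + s + η ≤ ε) {c c' : ℝ≥0∞}
    (hw_head : μ (⋃ n ∈ Finset.range (m + 1), {ω | δ < ‖(a n w : Ω → E) ω‖}) ≤ c)
    (hw_tail : w ∈ almostCauchySet (fun n => a n) m s c')
    (hv : ∀ᵐ ω ∂μ, ∀ n, ‖(a n v : Ω → E) ω‖ ≤ η) :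
    μ {ω | ∃ n, ε < ‖(a n (w + v) : Ω → E) ω‖} ≤ c + c' := by
  have hadd : ∀ᵐ ω ∂μ, ∀ n, (a n (w + v) : Ω → E) ω = (a n w : Ω → E) ω + (a n v : Ω → E) ω :=
    ae_all_iff.2 fun n => by rw [map_add]; exact AEEqFun.coeFn_add _ _
  refine (measure_mono_ae ?_).trans ((measure_mono (setOf_exists_lt_norm_subset _ m hs)).trans
    ((measure_union_le _ _).trans (add_le_add hw_head hw_tail)))
  filter_upwards [hv, hadd] with ω hvω haddω using fun ⟨n, hn⟩ => ⟨n, by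
    rw [haddω n] at hn
    linarith [norm_add_le ((a n w : Ω → E) ω) ((a n v : Ω → E) ω), hvω n]⟩

end AlmostCauchy

theorem norm_le_of_neg_le_of_le {z : ℂ} {c : ℝ} (h₁ : -(c : ℂ) ≤ z) (h₂ : z ≤ c) : ‖z‖ ≤ c := by
  obtain ⟨hre₂, him⟩ := Complex.le_def.1 h₂
  have hre₁ := (Complex.le_def.1 h₁).1
  simp only [Complex.neg_re, Complex.ofReal_re, Complex.ofReal_im] at hre₁ hre₂ him
  calc ‖z‖ ≤ |z.re| + |z.im| := Complex.norm_le_abs_re_add_abs_im z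
    _ ≤ c := by rw [him, abs_zero, add_zero, abs_le]; exact ⟨hre₁, hre₂⟩

section Positive

variable {Ω : Type*} [MeasurableSpace Ω] {μ : Measure Ω}

theorem ae_le_of_ae_le (A : Lp ℂ ⊤ μ →ₗ[ℂ] (Ω →ₘ[μ] ℂ))
    (hpos : ∀ x : Lp ℂ ⊤ μ, (∀ᵐ ω ∂μ, 0 ≤ (x : Ω → ℂ) ω) → ∀ᵐ ω ∂μ, 0 ≤ (A x : Ω → ℂ) ω)
    (hone : ∀ᵐ ω ∂μ, (A ((memLp_top_const (1 : ℂ)).toLp (fun _ => (1 : ℂ))) : Ω → ℂ) ω ≤ 1)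
    {c : ℝ} (hc : 0 ≤ c) {u : Lp ℂ ⊤ μ} (hu : ∀ᵐ ω ∂μ, (u : Ω → ℂ) ω ≤ c) :
    ∀ᵐ ω ∂μ, (A u : Ω → ℂ) ω ≤ c := by
  set one : Lp ℂ ⊤ μ := (memLp_top_const (1 : ℂ)).toLp fun _ => 1
  have h : ∀ᵐ ω ∂μ, 0 ≤ (A ((c : ℂ) • one - u) : Ω → ℂ) ω := hpos _ <| by
    filter_upwards [Lp.coeFn_sub ((c : ℂ) • one) u, Lp.coeFn_smul (c : ℂ) one,
      MemLp.coeFn_toLp (memLp_top_const (1 : ℂ)), hu] with ω h₁ h₂ h₃ h₄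
    rw [h₁, Pi.sub_apply, h₂, Pi.smul_apply, h₃, smul_eq_mul, mul_one, sub_nonneg]
    exact h₄
  rw [map_sub, map_smul] at h
  filter_upwards [h, AEEqFun.coeFn_sub ((c : ℂ) • A one) (A u),
    AEEqFun.coeFn_smul (c : ℂ) (A one), hone] with ω h₁ h₂ h₃ h₄
  rw [h₂, Pi.sub_apply, h₃, Pi.smul_apply, smul_eq_mul, sub_nonneg] at h₁
  exact h₁.trans (mul_le_of_le_one_right (Complex.zero_le_real.2 hc) h₄)

theorem ae_norm_le_of_neg_le_of_le (A : Lp ℂ ⊤ μ →ₗ[ℂ] (Ω →ₘ[μ] ℂ))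
    (hpos : ∀ x : Lp ℂ ⊤ μ, (∀ᵐ ω ∂μ, 0 ≤ (x : Ω → ℂ) ω) → ∀ᵐ ω ∂μ, 0 ≤ (A x : Ω → ℂ) ω)
    (hone : ∀ᵐ ω ∂μ, (A ((memLp_top_const (1 : ℂ)).toLp (fun _ => (1 : ℂ))) : Ω → ℂ) ω ≤ 1)
    {c : ℝ} (hc : 0 ≤ c) {v : Lp ℂ ⊤ μ}
    (hv : ∀ᵐ ω ∂μ, -(c : ℂ) ≤ (v : Ω → ℂ) ω ∧ (v : Ω → ℂ) ω ≤ c) :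
    ∀ᵐ ω ∂μ, ‖(A v : Ω → ℂ) ω‖ ≤ c := by
  have h₁ := ae_le_of_ae_le A hpos hone hc (hv.mono fun _ h => h.2)
  have h₂ := ae_le_of_ae_le A hpos hone hc (u := -v) <| by
    filter_upwards [Lp.coeFn_neg v, hv] with ω h h'
    rw [h, Pi.neg_apply, neg_le]
    exact h'.1
  rw [map_neg] at h₂
  filter_upwards [h₁, h₂, AEEqFun.coeFn_neg (A v)] with ω h₁ h₂ h₃
  rw [h₃, Pi.neg_apply, neg_le] at h₂
  exact norm_le_of_neg_le_of_le h₂ h₁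

theorem ae_norm_le_two_mul (A : Lp ℂ ⊤ μ →ₗ[ℂ] (Ω →ₘ[μ] ℂ))
    (hpos : ∀ x : Lp ℂ ⊤ μ, (∀ᵐ ω ∂μ, 0 ≤ (x : Ω → ℂ) ω) → ∀ᵐ ω ∂μ, 0 ≤ (A x : Ω → ℂ) ω)
    (hone : ∀ᵐ ω ∂μ, (A ((memLp_top_const (1 : ℂ)).toLp (fun _ => (1 : ℂ))) : Ω → ℂ) ω ≤ 1)
    {c : ℝ} (hc : 0 ≤ c) {u : Lp ℂ ⊤ μ}
    (hu : ∀ᵐ ω ∂μ, ‖(u : Ω → ℂ) ω‖ ≤ c) : ∀ᵐ ω ∂μ, ‖(A u : Ω → ℂ) ω‖ ≤ 2 * c := by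
  have hpart : ∀ L : ℂ →L[ℝ] ℝ, (∀ z, |L z| ≤ ‖z‖) →
      ∀ᵐ ω ∂μ, ‖(A ((Complex.ofRealCLM.comp L).compLp u) : Ω → ℂ) ω‖ ≤ c := by
    intro L hL
    refine ae_norm_le_of_neg_le_of_le A hpos hone hc ?_
    filter_upwards [(Complex.ofRealCLM.comp L).coeFn_compLp u, hu] with ω h₁ h₂
    rw [h₁, ContinuousLinearMap.comp_apply, Complex.ofRealCLM_apply, ← Complex.ofReal_neg,
      Complex.real_le_real, Complex.real_le_real, ← abs_le]
    exact (hL _).trans h₂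
  set u₁ := (Complex.ofRealCLM.comp Complex.reCLM).compLp u
  set u₂ := (Complex.ofRealCLM.comp Complex.imCLM).compLp u
  have hu_eq : u = u₁ + Complex.I • u₂ := by
    ext1
    filter_upwards [Lp.coeFn_add u₁ (Complex.I • u₂), Lp.coeFn_smul Complex.I u₂,
      (Complex.ofRealCLM.comp Complex.reCLM).coeFn_compLp u,
      (Complex.ofRealCLM.comp Complex.imCLM).coeFn_compLp u] with ω h₁ h₂ h₃ h₄
    rw [h₁, Pi.add_apply, h₂, Pi.smul_apply, h₃, h₄]
    simp [mul_comm Complex.I, Complex.re_add_im]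
  rw [hu_eq, map_add, map_smul]
  filter_upwards [hpart Complex.reCLM Complex.abs_re_le_norm,
    hpart Complex.imCLM Complex.abs_im_le_norm, AEEqFun.coeFn_add (A u₁) (Complex.I • A u₂),
    AEEqFun.coeFn_smul Complex.I (A u₂)] with ω h₁ h₂ h₃ h₄
  rw [h₃, Pi.add_apply, h₄, Pi.smul_apply, two_mul]
  exact (norm_add_le _ _).trans (add_le_add h₁ (by rwa [norm_smul, Complex.norm_I, one_mul]))

end Positive

section Continuity

variable {Ω : Type*} [MeasurableSpace Ω] {μ : Measure Ω}

theorem exists_pos_measure_biUnion_le_of_kyFanClose_zero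
    (A : ℕ → Lp ℂ ⊤ μ →ₗ[ℂ] (Ω →ₘ[μ] ℂ)) (J : Finset ℕ)
    (hA : ∀ n ∈ J, ∀ xs : ℕ → Lp ℂ ⊤ μ,
      TendstoMeasTop μ (fun k ω => (xs k : Ω → ℂ) ω) (fun ω => ((0 : Lp ℂ ⊤ μ) : Ω → ℂ) ω) →
      TendstoMeasTop μ (fun k ω => (A n (xs k) : Ω → ℂ) ω) (fun ω => (A n 0 : Ω → ℂ) ω))
    {δ : ℝ} (hδ : 0 < δ) {ε : ℝ≥0∞} (hε : 0 < ε) :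
    ∃ γ > 0, ∀ x : Lp ℂ ⊤ μ, KyFanClose μ x 0 γ →
      μ (⋃ n ∈ J, {ω | δ < ‖(A n x : Ω → ℂ) ω‖}) ≤ ε := by
  by_contra! h
  choose xs hxs hbad using fun k : ℕ => h (1 / (k + 1)) Nat.one_div_pos_of_nat
  have hx : TendstoMeasTop μ (fun k ω => (xs k : Ω → ℂ) ω)
      (fun ω => ((0 : Lp ℂ ⊤ μ) : Ω → ℂ) ω) :=
    tendstoMeasTop_of_kyFanClose tendsto_one_div_add_atTop_nhds_zero_nat fun k =>
      (hxs k).congr EventuallyEq.rfl (Lp.coeFn_zero ℂ ⊤ μ).symm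
  obtain ⟨k, hk⟩ := (eventually_measure_biUnion_le_of_tendstoMeasTop J
    (fun n hn => hA n hn xs hx) hδ hε).exists
  have hzero : ∀ᵐ ω ∂μ, ∀ n, (A n 0 : Ω → ℂ) ω = 0 :=
    ae_all_iff.2 fun n => by rw [map_zero]; exact AEEqFun.coeFn_zero
  refine (hbad k).not_ge ((measure_mono_ae ?_).trans hk)
  filter_upwards [hzero] with ω hω hmem
  obtain ⟨n, hn, hlt⟩ := Set.mem_iUnion₂.1 hmem
  exact Set.mem_iUnion₂.2 ⟨n, hn, show δ < ‖_ - _‖ by rwa [hω n, sub_zero]⟩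

end Continuity

end BanachPrinciple

open BanachPrinciple in
theorem stmt_16_general {Ω : Type*} [MeasurableSpace Ω] (μ : Measure Ω)
    (a : ℕ → (Lp ℂ ⊤ μ) →ₗ[ℂ] (Ω →ₘ[μ] ℂ))
    (ha_pos : ∀ n (x : Lp ℂ ⊤ μ), (∀ᵐ ω ∂μ, 0 ≤ (x : Ω → ℂ) ω) →
      ∀ᵐ ω ∂μ, 0 ≤ (a n x : Ω → ℂ) ω)
    (ha_one : ∀ n, ∀ᵐ ω ∂μ,
      (a n ((memLp_top_const (1 : ℂ)).toLp (fun _ => (1 : ℂ))) : Ω → ℂ) ω ≤ 1)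
    (ha_cont : ∀ n (xs : ℕ → Lp ℂ ⊤ μ) (x : Lp ℂ ⊤ μ),
      TendstoMeasTop μ (fun k ω => (xs k : Ω → ℂ) ω) (fun ω => (x : Ω → ℂ) ω) →
      TendstoMeasTop μ (fun k ω => (a n (xs k) : Ω → ℂ) ω) (fun ω => (a n x : Ω → ℂ) ω))
    (ha_conv : ∀ x : Lp ℂ ⊤ μ, ‖x‖ ≤ 1 → ∃ g : Ω → ℂ, Measurable g ∧
      ConvAU μ (fun n ω => (a n x : Ω → ℂ) ω) g) :
    UnifEquicont μ (fun n x => a n x) {x : Lp ℂ ⊤ μ | ‖x‖ ≤ 1} := by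
  intro ε δ hε hδ
  obtain ⟨m, x₀, ρ₀, hρ₀, hx₀, hball⟩ := exists_kyFanClose_subset_of_forall_exists_mem
    (S := fun m => almostCauchySet (fun n x => a n x) m (δ / 8) (.ofReal (ε / 4)))
    (T := fun m => almostCauchySet (fun n x => a n x) m (2 * (δ / 8)) (.ofReal (ε / 4)))
    (fun x hx => let ⟨_, _, hg⟩ := ha_conv x hx
      exists_measure_tailOscSet_le_of_convAU hg (by positivity) (by positivity))
    (fun m y _ hy => mem_almostCauchySet_of_forall_kyFanClose _
      (fun n xs => ha_cont n xs y) (by positivity) hy)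
  obtain ⟨γ₁, hγ₁, hhead⟩ := exists_pos_measure_biUnion_le_of_kyFanClose_zero a
    (Finset.range (m + 1)) (fun n _ xs => ha_cont n xs 0) (by positivity : 0 < δ / 4)
    (ENNReal.ofReal_pos.2 (by positivity : 0 < ε / 2))
  set γ := min (min ρ₀ γ₁) (δ / 8)
  have hγ : 0 < γ := by positivity
  refine ⟨γ, hγ, fun x hx ⟨F, hF, hFμ, hxF⟩ => ?_⟩
  have hxγ : KyFanClose μ x 0 γ := (measure_le_measure_compl_of_ae_restrict hF
    (by filter_upwards [hxF] with ω hω using by simpa using hω)).trans hFμ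
  obtain ⟨y, y', v, rfl, hy, hy', hyx₀, hy'x₀, hw, hv⟩ :=
    exists_eq_sub_add_of_kyFanClose_zero hx₀ hx hγ.le hxγ
  have hw_tail := sub_mem_almostCauchySet (a := a)
    (hball y hy (hyx₀.mono (by simp [γ]))) (hball y' hy' (hy'x₀.mono (by simp [γ])))
  have hav : ∀ᵐ ω ∂μ, ∀ n, ‖(a n v : Ω → ℂ) ω‖ ≤ 2 * γ :=
    ae_all_iff.2 fun n => ae_norm_le_two_mul (a n) (ha_pos n) (ha_one n) hγ.le hv
  refine exists_measurableSet_forall_essSup_le (f := fun n => (a n (y - y' + v) : Ω → ℂ))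
    ((measure_setOf_exists_lt_norm_map_add_le (by positivity)
      (by linarith [min_le_right (min ρ₀ γ₁) (δ / 8)]) (hhead _ (hw.mono (by simp [γ])))
      hw_tail hav).trans_eq ?_)
  rw [← ENNReal.ofReal_add (by positivity) (by positivity),
    ← ENNReal.ofReal_add (by positivity) (by positivity)]
  ring_nf

/-- Theorem 3.6 (commutative): let `a_n : L^∞ → L⁰` be positive linear maps with
`a_n(1) ≤ 1` a.e., each sequentially continuous in the measure topology. If `(a_n(x))_n`
converges almost uniformly for every `x` in the unit ball of `L^∞`, then `(a_n)` is
uniformly equicontinuous at `0` on the unit ball. -/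
theorem stmt_16 {Ω : Type*} [MeasurableSpace Ω] (μ : Measure Ω) [SigmaFinite μ]
    (a : ℕ → (Lp ℂ ⊤ μ) →ₗ[ℂ] (Ω →ₘ[μ] ℂ))
    (ha_pos : ∀ n (x : Lp ℂ ⊤ μ), (∀ᵐ ω ∂μ, 0 ≤ (x : Ω → ℂ) ω) →
      ∀ᵐ ω ∂μ, 0 ≤ (a n x : Ω → ℂ) ω)
    (ha_one : ∀ n, ∀ᵐ ω ∂μ,
      (a n ((memLp_top_const (1 : ℂ)).toLp (fun _ => (1 : ℂ))) : Ω → ℂ) ω ≤ 1)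
    (ha_cont : ∀ n (xs : ℕ → Lp ℂ ⊤ μ) (x : Lp ℂ ⊤ μ),
      TendstoMeasTop μ (fun k ω => (xs k : Ω → ℂ) ω) (fun ω => (x : Ω → ℂ) ω) →
      TendstoMeasTop μ (fun k ω => (a n (xs k) : Ω → ℂ) ω) (fun ω => (a n x : Ω → ℂ) ω))
    (ha_conv : ∀ x : Lp ℂ ⊤ μ, ‖x‖ ≤ 1 → ∃ g : Ω → ℂ, Measurable g ∧
      ConvAU μ (fun n ω => (a n x : Ω → ℂ) ω) g) :
    UnifEquicont μ (fun n x => a n x) {x : Lp ℂ ⊤ μ | ‖x‖ ≤ 1} :=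
  stmt_16_general μ a ha_pos ha_one ha_cont ha_conv
end

section
/- (Commutative case of Theorem 3.8, key implication.) Let (Ω,Σ,μ) be a σ-finite measure space and let a_n : L^∞(Ω,μ;ℂ) → L⁰(Ω,μ;ℂ) be a sequence of additive maps which is uniformly equicontinuous at 0 on the unit ball { x ∈ L^∞ : ‖x‖_∞ ≤ 1 }. Suppose D is a subset of the unit ball, dense in the unit ball with respect to the measure topology (every x in the unit ball is the measure-topology limit of a sequence from D), such that (a_n(x))_n converges almost uniformly for every x ∈ D. Then (a_n(x))_n converges almost uniformly for every x in the unit ball. -/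
/-!
Fix `x` in the unit ball and `ε > 0`. Choose `y ∈ D` so close to `x` in measure that uniform
equicontinuity, applied to `(x - y) / 2`, makes `a_n x - a_n y = 2 a_n ((x - y) / 2)` at most
`ε / 2` off a set of measure `≤ ε / 2`, simultaneously for all `n`; since `a_n y` converges
almost uniformly to some `g`, the sequence `a_n x` is eventually within `ε` of `g` off a set of
measure `≤ ε`. Such approximate limits `g_j` for `ε = 2⁻ʲ` are pairwise close where both are
good, and by Borel–Cantelli almost every point is eventually good, so `g_j` converges a.e. to
some `g`; the tails `⋂_{j ≥ J}` of the good sets then witness the almost uniform convergence.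
-/

open MeasureTheory Filter Topology
open scoped ENNReal

lemma coe_nnnorm_le_ofReal_iff {E : Type*} [SeminormedAddGroup E] {z : E} {r : ℝ} (hr : 0 ≤ r) :
    (‖z‖₊ : ℝ≥0∞) ≤ ENNReal.ofReal r ↔ ‖z‖ ≤ r := by
  change ‖z‖ₑ ≤ _ ↔ _
  rw [← ofReal_norm, ENNReal.ofReal_le_ofReal_iff hr]

lemma tendsto_essSup_nnnorm_iff {Ω E : Type*} [MeasurableSpace Ω] [SeminormedAddGroup E]
    {ν : Measure Ω} {F : ℕ → Ω → E} :
    Tendsto (fun n => essSup (fun ω => (‖F n ω‖₊ : ℝ≥0∞)) ν) atTop (𝓝 0) ↔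
      ∀ η : ℝ, 0 < η → ∀ᶠ n in atTop, ∀ᵐ ω ∂ν, ‖F n ω‖ ≤ η := by
  rw [ENNReal.tendsto_atTop_zero]
  constructor
  · intro h η hη
    obtain ⟨N, hN⟩ := h (ENNReal.ofReal η) (ENNReal.ofReal_pos.2 hη)
    filter_upwards [eventually_ge_atTop N] with n hn
    filter_upwards [ENNReal.ae_le_essSup (fun ω => (‖F n ω‖₊ : ℝ≥0∞))] with ω hω
    exact (coe_nnnorm_le_ofReal_iff hη.le).1 (hω.trans (hN n hn))
  · intro h ε hε
    obtain ⟨η, hη0, hηpos, hηε⟩ := ENNReal.lt_iff_exists_real_btwn.1 hε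
    obtain ⟨N, hN⟩ := eventually_atTop.1 (h η (ENNReal.ofReal_pos.1 hηpos))
    refine ⟨N, fun n hn => (essSup_le_of_ae_le _ ?_).trans hηε.le⟩
    filter_upwards [hN n hn] with ω hω
    exact (coe_nnnorm_le_ofReal_iff hη0).2 hω

theorem convAU_iff {Ω : Type*} [MeasurableSpace Ω] {μ : Measure Ω} {f : ℕ → Ω → ℂ}
    {g : Ω → ℂ} :
    ConvAU μ f g ↔ ∀ ε : ℝ, 0 < ε → ∃ E : Set Ω, MeasurableSet E ∧ μ Eᶜ ≤ ENNReal.ofReal ε ∧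
      ∀ η : ℝ, 0 < η → ∀ᶠ n in atTop, ∀ᵐ ω ∂μ, ω ∈ E → ‖f n ω - g ω‖ ≤ η := by
  refine forall₂_congr fun ε _ => exists_congr fun E => and_congr_right fun hE => ?_
  simp only [tendsto_essSup_nnnorm_iff (F := fun n ω => f n ω - g ω), ae_restrict_iff' hE]

section Limits

variable {E : Type*} [SeminormedAddCommGroup E]

lemma cauchySeq_of_norm_sub_le_add {u : ℕ → E} {ε : ℕ → ℝ} (hε : Tendsto ε atTop (𝓝 0))
    (hu : ∀ᶠ p in atTop ×ˢ atTop, ‖u p.1 - u p.2‖ ≤ ε p.1 + ε p.2) : CauchySeq u := by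
  rw [cauchySeq_iff_tendsto_dist_atTop_0, ← prod_atTop_atTop_eq]
  refine squeeze_zero' (.of_forall fun _ => dist_nonneg) (g := fun p => ε p.1 + ε p.2)
    (hu.mono fun p hp => ?_) ?_
  · rwa [dist_eq_norm]
  · simpa using (hε.comp tendsto_fst).add (hε.comp tendsto_snd)

lemma norm_sub_le_of_tendsto {u : ℕ → E} {l : E} {ε : ℕ → ℝ} (hu : Tendsto u atTop (𝓝 l))
    (hε : Tendsto ε atTop (𝓝 0)) {i : ℕ} (h : ∀ᶠ j in atTop, ‖u i - u j‖ ≤ ε i + ε j) :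
    ‖u i - l‖ ≤ ε i :=
  le_of_tendsto_of_tendsto (tendsto_const_nhds.sub hu).norm
    (by simpa using tendsto_const_nhds.add hε) h

end Limits

theorem exists_measurable_ae_norm_sub_le {Ω E : Type*} [MeasurableSpace Ω] {μ : Measure Ω}
    [NormedAddCommGroup E] [CompleteSpace E] [MeasurableSpace E] [BorelSpace E]
    {g : ℕ → Ω → E} {s : ℕ → Set Ω} {ε : ℕ → ℝ} (hg : ∀ j, Measurable (g j))
    (hε : Tendsto ε atTop (𝓝 0)) (hs : ∑' j, μ (s j)ᶜ ≠ ∞)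
    (hgs : ∀ᵐ ω ∂μ, ∀ i j, ω ∈ s i → ω ∈ s j → ‖g i ω - g j ω‖ ≤ ε i + ε j) :
    ∃ g' : Ω → E, Measurable g' ∧ ∀ᵐ ω ∂μ, ∀ i, ω ∈ s i → ‖g i ω - g' ω‖ ≤ ε i := by
  have hev : ∀ᵐ ω ∂μ, ∀ᶠ j in atTop, ω ∈ s j := by
    filter_upwards [ae_eventually_notMem hs] with ω hω
    simpa using hω
  obtain ⟨g', hg', hlim⟩ := measurable_limit_of_tendsto_metrizable_ae
    (fun j => (hg j).aemeasurable) (by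
      filter_upwards [hev, hgs] with ω hev hgs
      exact cauchySeq_tendsto_of_complete <| cauchySeq_of_norm_sub_le_add hε <|
        (hev.prod_mk hev).mono fun p hp => hgs _ _ hp.1 hp.2)
  refine ⟨g', hg', ?_⟩
  filter_upwards [hlim, hev, hgs] with ω hlim hev hgs i hi
  exact norm_sub_le_of_tendsto hlim hε (hev.mono fun j hj => hgs i j hi hj)

theorem exists_convAU_of_forall_approx {Ω : Type*} [MeasurableSpace Ω] {μ : Measure Ω}
    {f : ℕ → Ω → ℂ}
    (h : ∀ ε : ℝ, 0 < ε → ∃ g : Ω → ℂ, Measurable g ∧ ∃ E : Set Ω, MeasurableSet E ∧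
      μ Eᶜ ≤ ENNReal.ofReal ε ∧ ∀ᶠ n in atTop, ∀ᵐ ω ∂μ, ω ∈ E → ‖f n ω - g ω‖ ≤ ε) :
    ∃ g : Ω → ℂ, Measurable g ∧ ConvAU μ f g := by
  set ε : ℕ → ℝ := fun j => (1 / 2) ^ j
  have hε : Tendsto ε atTop (𝓝 0) :=
    tendsto_pow_atTop_nhds_zero_of_lt_one (by norm_num) (by norm_num)
  choose g hg E hE hμE hfg using fun j => h (ε j) (by positivity)
  have hsum : ∑' j, μ (E j)ᶜ ≠ ∞ := by
    refine ne_top_of_le_ne_top ?_ (ENNReal.tsum_le_tsum hμE)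
    rw [← ENNReal.ofReal_tsum_of_nonneg (fun j => by positivity)
      (summable_geometric_of_lt_one (by norm_num) (by norm_num))]
    exact ENNReal.ofReal_ne_top
  have hpair : ∀ᵐ ω ∂μ, ∀ i j, ω ∈ E i → ω ∈ E j → ‖g i ω - g j ω‖ ≤ ε i + ε j := by
    refine ae_all_iff.2 fun i => ae_all_iff.2 fun j => ?_
    obtain ⟨n, hi, hj⟩ := ((hfg i).and (hfg j)).exists
    filter_upwards [hi, hj] with ω hi hj hωi hωj
    calc ‖g i ω - g j ω‖ ≤ ‖f n ω - g i ω‖ + ‖f n ω - g j ω‖ := by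
          rw [norm_sub_rev (f n ω)]; exact norm_sub_le_norm_sub_add_norm_sub _ _ _
      _ ≤ ε i + ε j := add_le_add (hi hωi) (hj hωj)
  obtain ⟨g', hg', hgg'⟩ := exists_measurable_ae_norm_sub_le hg hε hsum hpair
  refine ⟨g', hg', convAU_iff.2 fun δ hδ => ?_⟩
  obtain ⟨J, hJ⟩ := ((ENNReal.tendsto_sum_nat_add _ hsum).eventually
    (ge_mem_nhds (ENNReal.ofReal_pos.2 hδ))).exists
  refine ⟨⋂ j, E (j + J), .iInter fun j => hE _, ?_, fun η hη => ?_⟩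
  · rw [Set.compl_iInter]
    exact (measure_iUnion_le _).trans hJ
  obtain ⟨i, hiJ, hiη⟩ :=
    ((eventually_ge_atTop J).and (hε.eventually (ge_mem_nhds (half_pos hη)))).exists
  filter_upwards [hfg i] with n hn
  filter_upwards [hn, hgg'] with ω hn hgg' hω
  have hωi : ω ∈ E i := by simpa [Nat.sub_add_cancel hiJ] using Set.mem_iInter.1 hω (i - J)
  calc ‖f n ω - g' ω‖ ≤ ‖f n ω - g i ω‖ + ‖g i ω - g' ω‖ := norm_sub_le_norm_sub_add_norm_sub _ _ _
    _ ≤ ε i + ε i := add_le_add (hn hωi) (hgg' i hωi)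
    _ ≤ η := by linarith

theorem UnifEquicont.exists_ae_norm_sub_le {Ω : Type*} [MeasurableSpace Ω] {μ : Measure Ω}
    {a : ℕ → Lp ℂ ⊤ μ → Ω →ₘ[μ] ℂ} (ha_add : ∀ n (x y : Lp ℂ ⊤ μ), a n (x + y) = a n x + a n y)
    (h : UnifEquicont μ a {x : Lp ℂ ⊤ μ | ‖x‖ ≤ 1}) {ε δ : ℝ} (hε : 0 < ε) (hδ : 0 < δ) :
    ∃ γ : ℝ, 0 < γ ∧ ∀ x y : Lp ℂ ⊤ μ, ‖x‖ ≤ 1 → ‖y‖ ≤ 1 →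
      (∃ F : Set Ω, MeasurableSet F ∧ μ Fᶜ ≤ ENNReal.ofReal γ ∧
        ∀ᵐ ω ∂μ.restrict F, ‖(x : Ω → ℂ) ω - (y : Ω → ℂ) ω‖ ≤ γ) →
      ∃ G : Set Ω, MeasurableSet G ∧ μ Gᶜ ≤ ENNReal.ofReal ε ∧
        ∀ n, ∀ᵐ ω ∂μ, ω ∈ G → ‖(a n x : Ω → ℂ) ω - (a n y : Ω → ℂ) ω‖ ≤ δ := by
  obtain ⟨γ, hγ, hequi⟩ := h ε (δ / 2) hε (half_pos hδ)
  refine ⟨γ, hγ, fun x y hx hy ⟨F, hF, hμF, hxy⟩ => ?_⟩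
  -- `x - y` may have norm `2`, so the equicontinuity is applied to its half `z`.
  set z : Lp ℂ ⊤ μ := (2⁻¹ : ℂ) • (x - y)
  have hz : ‖z‖ ≤ 1 := by
    calc ‖z‖ = 2⁻¹ * ‖x - y‖ := by simp [z, norm_smul]
      _ ≤ 2⁻¹ * (1 + 1) := by gcongr; exact (norm_sub_le x y).trans (add_le_add hx hy)
      _ = 1 := by norm_num
  have hz_coe : (z : Ω → ℂ) =ᵐ[μ] fun ω => 2⁻¹ * ((x : Ω → ℂ) ω - (y : Ω → ℂ) ω) := by
    filter_upwards [Lp.coeFn_smul (2⁻¹ : ℂ) (x - y), Lp.coeFn_sub x y] with ω hsmul hsub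
    simp only [z, hsmul, Pi.smul_apply, hsub, Pi.sub_apply, smul_eq_mul]
  obtain ⟨G, hG, hμG, hbound⟩ := hequi z hz ⟨F, hF, hμF, by
    filter_upwards [ae_restrict_of_ae hz_coe, hxy] with ω hzω hxyω
    rw [hzω, norm_mul, norm_inv, Complex.norm_two]
    linarith [norm_nonneg ((x : Ω → ℂ) ω - (y : Ω → ℂ) ω)]⟩
  have hx_eq : x = y + (z + z) := by
    rw [← two_smul ℂ z, smul_smul]
    norm_num
  have hsplit : ∀ n, (fun ω => (a n x : Ω → ℂ) ω - (a n y : Ω → ℂ) ω) =ᵐ[μ]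
      fun ω => (a n z : Ω → ℂ) ω + (a n z : Ω → ℂ) ω := by
    intro n
    have ha : a n x = a n y + (a n z + a n z) := by rw [hx_eq, ha_add, ha_add]
    rw [ha]
    filter_upwards [AEEqFun.coeFn_add (a n y) (a n z + a n z),
      AEEqFun.coeFn_add (a n z) (a n z)] with ω h1 h2
    rw [h1, Pi.add_apply, h2, Pi.add_apply, add_sub_cancel_left]
  refine ⟨G, hG, hμG, fun n => ?_⟩
  rw [← ae_restrict_iff' hG]
  filter_upwards [ae_restrict_of_ae (hsplit n), ENNReal.ae_le_essSup _] with ω hsplit hess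
  have hzω : ‖(a n z : Ω → ℂ) ω‖ ≤ δ / 2 :=
    (coe_nnnorm_le_ofReal_iff (half_pos hδ).le).1 (hess.trans (hbound n))
  rw [hsplit]
  linarith [norm_add_le ((a n z : Ω → ℂ) ω) ((a n z : Ω → ℂ) ω)]

theorem stmt_18_general {Ω : Type*} [MeasurableSpace Ω] (μ : Measure Ω)
    (a : ℕ → (Lp ℂ ⊤ μ) → (Ω →ₘ[μ] ℂ))
    (ha_add : ∀ n (x y : Lp ℂ ⊤ μ), a n (x + y) = a n x + a n y)
    (h : UnifEquicont μ a {x : Lp ℂ ⊤ μ | ‖x‖ ≤ 1})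
    (D : Set (Lp ℂ ⊤ μ)) (hD_ball : D ⊆ {x : Lp ℂ ⊤ μ | ‖x‖ ≤ 1})
    (hD_dense : ∀ x : Lp ℂ ⊤ μ, ‖x‖ ≤ 1 → ∃ ys : ℕ → Lp ℂ ⊤ μ, (∀ k, ys k ∈ D) ∧
      TendstoMeasTop μ (fun k ω => (ys k : Ω → ℂ) ω) (fun ω => (x : Ω → ℂ) ω))
    (hD_conv : ∀ y ∈ D, ∃ g : Ω → ℂ, Measurable g ∧
      ConvAU μ (fun n ω => (a n y : Ω → ℂ) ω) g) :
    ∀ x : Lp ℂ ⊤ μ, ‖x‖ ≤ 1 → ∃ g : Ω → ℂ, Measurable g ∧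
      ConvAU μ (fun n ω => (a n x : Ω → ℂ) ω) g := by
  intro x hx
  refine exists_convAU_of_forall_approx fun ε hε => ?_
  obtain ⟨ys, hysD, hys⟩ := hD_dense x hx
  obtain ⟨γ, hγ, hdiff⟩ := h.exists_ae_norm_sub_le ha_add (half_pos hε) (half_pos hε)
  obtain ⟨K, hK⟩ := hys γ γ hγ hγ
  obtain ⟨F, hF, hμF, hyx⟩ := hK K le_rfl
  obtain ⟨G, hG, hμG, hxy⟩ := hdiff x (ys K) hx (hD_ball (hysD K))
    ⟨F, hF, hμF, by simpa only [norm_sub_rev] using hyx⟩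
  obtain ⟨g, hg, hconv⟩ := hD_conv (ys K) (hysD K)
  obtain ⟨E, hE, hμE, hyg⟩ := convAU_iff.1 hconv (ε / 2) (half_pos hε)
  refine ⟨g, hg, G ∩ E, hG.inter hE, ?_, ?_⟩
  · calc μ (G ∩ E)ᶜ ≤ μ Gᶜ + μ Eᶜ := by rw [Set.compl_inter]; exact measure_union_le _ _
      _ ≤ ENNReal.ofReal (ε / 2) + ENNReal.ofReal (ε / 2) := add_le_add hμG hμE
      _ = ENNReal.ofReal ε := by
        rw [← ENNReal.ofReal_add (by positivity) (by positivity), add_halves]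
  filter_upwards [hyg (ε / 2) (half_pos hε)] with n hn
  filter_upwards [hn, hxy n] with ω hyω hxω hω
  calc ‖(a n x : Ω → ℂ) ω - g ω‖
      ≤ ‖(a n x : Ω → ℂ) ω - (a n (ys K) : Ω → ℂ) ω‖ + ‖(a n (ys K) : Ω → ℂ) ω - g ω‖ :=
        norm_sub_le_norm_sub_add_norm_sub _ _ _
    _ ≤ ε / 2 + ε / 2 := add_le_add (hxω hω.1) (hyω hω.2)
    _ = ε := add_halves ε

/-- Theorem 3.8 (commutative, key implication): if a sequence of additive maps
`a_n : L^∞ → L⁰` is uniformly equicontinuous at `0` on the unit ball, and `(a_n(x))_n`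
converges almost uniformly for every `x` in a subset `D` of the unit ball which is dense
in the unit ball for the measure topology, then `(a_n(x))_n` converges almost uniformly
for every `x` in the unit ball. -/
theorem stmt_18 {Ω : Type*} [MeasurableSpace Ω] (μ : Measure Ω) [SigmaFinite μ]
    (a : ℕ → (Lp ℂ ⊤ μ) → (Ω →ₘ[μ] ℂ))
    (ha_add : ∀ n (x y : Lp ℂ ⊤ μ), a n (x + y) = a n x + a n y)
    (h : UnifEquicont μ a {x : Lp ℂ ⊤ μ | ‖x‖ ≤ 1})
    (D : Set (Lp ℂ ⊤ μ)) (hD_ball : D ⊆ {x : Lp ℂ ⊤ μ | ‖x‖ ≤ 1})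
    (hD_dense : ∀ x : Lp ℂ ⊤ μ, ‖x‖ ≤ 1 → ∃ ys : ℕ → Lp ℂ ⊤ μ, (∀ k, ys k ∈ D) ∧
      TendstoMeasTop μ (fun k ω => (ys k : Ω → ℂ) ω) (fun ω => (x : Ω → ℂ) ω))
    (hD_conv : ∀ y ∈ D, ∃ g : Ω → ℂ, Measurable g ∧
      ConvAU μ (fun n ω => (a n y : Ω → ℂ) ω) g) :
    ∀ x : Lp ℂ ⊤ μ, ‖x‖ ≤ 1 → ∃ g : Ω → ℂ, Measurable g ∧
      ConvAU μ (fun n ω => (a n x : Ω → ℂ) ω) g :=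
  stmt_18_general μ a ha_add h D hD_ball hD_dense hD_conv
end
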